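/- arXiv:2509.12587 — 5 statements merged into one kernel-verified Lean document; each statement's English description precedes it below -/
import Mathlib

section
/- Sample-level part of Proposition 1: For data (z_i, y_i), i = 1,...,n, with 0 < z̄ < 1 and S_yy invertible, the inverse least-squares coefficient satisfies β̂ = z̄(1−z̄) S_yy^{-1} τ̂. Moreover, S_yy = z̄(1−z̄)[τ̂τ̂ᵀ + Σ̂], where Σ̂ = (1−z̄)^{-1} ĉov{Y(1)} + z̄^{-1} ĉov{Y(0)}, so that when Σ̂ is invertible, β̂ = Σ̂^{-1}τ̂ / (1 + τ̂ᵀ Σ̂^{-1} τ̂). Here ĉov{Y(1)} = (n z̄)^{-1} Σ_i z_i (y_i − ȳ(1))(y_i − ȳ(1))ᵀ and ĉov{Y(0)} = (n(1−z̄))^{-1} Σ_i (1−z_i)(y_i − ȳ(0))(y_i − ȳ(0))ᵀ. -/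
/-!
Split every sum over the sample into its treated part (weights `zᵢ`) and its control part
(weights `1 - zᵢ`). The pooled mean is the mixture
`ȳ = z̄ ȳ(1) + (1 - z̄) ȳ(0)`, so `ȳ(1) - ȳ = (1 - z̄) τ̂` and `ȳ(0) - ȳ = -z̄ τ̂`. The cross moment
`S_yz` then collapses to `z̄ (1 - z̄) τ̂`, and the parallel axis theorem applied in each group
splits the total scatter into within-group scatter `n z̄ (1 - z̄) Σ̂` and between-group scatter
`n z̄ (1 - z̄) τ̂ τ̂ᵀ`. The last formula is the Sherman–Morrison identity for `(τ̂ τ̂ᵀ + Σ̂)⁻¹ τ̂`.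
-/

open Matrix Finset

section Scatter

variable {ι κ R : Type*} [Fintype ι] [CommRing R]

theorem sum_eq_smul_of_eq_fun_div {K : Type*} [Field K] {f : ι → κ → K} {s : K} {m : κ → K}
    (hs : s ≠ 0) (hm : m = fun j => (∑ i, f i j) / s) : ∑ i, f i = s • m := by
  ext j
  simp [hm, Finset.sum_apply, mul_div_cancel₀ _ hs]

theorem sum_eq_sum_smul_add_sum_one_sub_smul {M : Type*} [AddCommGroup M] [Module R M]
    (w : ι → R) (f : ι → M) : ∑ i, f i = ∑ i, w i • f i + ∑ i, (1 - w i) • f i := by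
  simp only [← Finset.sum_add_distrib, ← add_smul, add_sub_cancel, one_smul]

theorem sum_vecMulVec_left (f : ι → κ → R) (v : κ → R) :
    ∑ i, vecMulVec (f i) v = vecMulVec (∑ i, f i) v := by
  ext j k
  simp only [Matrix.sum_apply, vecMulVec_apply, Finset.sum_apply, Finset.sum_mul]

theorem sum_vecMulVec_right (v : κ → R) (f : ι → κ → R) :
    ∑ i, vecMulVec v (f i) = vecMulVec v (∑ i, f i) := by
  ext j k
  simp only [Matrix.sum_apply, vecMulVec_apply, Finset.sum_apply, Finset.mul_sum]

theorem sum_smul_sub_eq_zero {w : ι → R} {y : ι → κ → R} {m : κ → R}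
    (hm : ∑ i, w i • y i = (∑ i, w i) • m) : ∑ i, w i • (y i - m) = 0 := by
  simp only [smul_sub, Finset.sum_sub_distrib, ← Finset.sum_smul, hm, sub_self]

theorem sum_sub_smul_sub_eq {w : ι → R} {y : ι → κ → R} {m c : κ → R} (a : R)
    (hc : ∑ i, y i = (Fintype.card ι : R) • c) (hm : ∑ i, w i • y i = (∑ i, w i) • m) :
    ∑ i, (w i - a) • (y i - c) = (∑ i, w i) • (m - c) := by
  have hdev : ∑ i, (y i - c) = 0 := by
    rw [Finset.sum_sub_distrib, hc, Finset.sum_const, Finset.card_univ, Nat.cast_smul_eq_nsmul,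
      sub_self]
  calc ∑ i, (w i - a) • (y i - c) = ∑ i, w i • (y i - c) - a • ∑ i, (y i - c) := by
        rw [Finset.smul_sum, ← Finset.sum_sub_distrib]
        simp only [sub_smul]
    _ = (∑ i, w i) • (m - c) := by
        simp only [hdev, smul_zero, sub_zero, smul_sub, Finset.sum_sub_distrib, hm,
          ← Finset.sum_smul]

theorem sum_smul_vecMulVec_sub_eq_add {w : ι → R} {y : ι → κ → R} {m : κ → R}
    (hm : ∑ i, w i • y i = (∑ i, w i) • m) (c : κ → R) :
    ∑ i, w i • vecMulVec (y i - c) (y i - c) =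
      ∑ i, w i • vecMulVec (y i - m) (y i - m) + (∑ i, w i) • vecMulVec (m - c) (m - c) := by
  have hsplit : ∀ i, w i • vecMulVec (y i - c) (y i - c) =
      w i • vecMulVec (y i - m) (y i - m) + vecMulVec (w i • (y i - m)) (m - c) +
        vecMulVec (m - c) (w i • (y i - m)) + w i • vecMulVec (m - c) (m - c) := by
    intro i
    rw [show y i - c = (y i - m) + (m - c) by abel]
    simp only [add_vecMulVec, vecMulVec_add, smul_vecMulVec, vecMulVec_smul, smul_add]
    abel
  simp only [hsplit, Finset.sum_add_distrib, sum_vecMulVec_left, sum_vecMulVec_right,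
    sum_smul_sub_eq_zero hm, zero_vecMulVec, vecMulVec_zero, add_zero, ← Finset.sum_smul]

theorem sum_vecMulVec_sub_eq_within_add_between {w : ι → R} {y : ι → κ → R} {m₁ m₀ : κ → R}
    (hm₁ : ∑ i, w i • y i = (∑ i, w i) • m₁)
    (hm₀ : ∑ i, (1 - w i) • y i = (∑ i, (1 - w i)) • m₀) (c : κ → R) :
    ∑ i, vecMulVec (y i - c) (y i - c) =
      ∑ i, w i • vecMulVec (y i - m₁) (y i - m₁) +
        ∑ i, (1 - w i) • vecMulVec (y i - m₀) (y i - m₀) +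
        ((∑ i, w i) • vecMulVec (m₁ - c) (m₁ - c) +
          (∑ i, (1 - w i)) • vecMulVec (m₀ - c) (m₀ - c)) := by
  rw [sum_eq_sum_smul_add_sum_one_sub_smul w, sum_smul_vecMulVec_sub_eq_add hm₁,
    sum_smul_vecMulVec_sub_eq_add hm₀]
  abel

end Scatter

theorem inv_vecMulVec_add_mulVec {K ι : Type*} [Field K] [Fintype ι] [DecidableEq ι]
    {S : Matrix ι ι K} (u v : ι → K) (hS : IsUnit S.det) (hA : IsUnit (vecMulVec u v + S).det) :
    (vecMulVec u v + S)⁻¹ *ᵥ u = (1 + v ⬝ᵥ (S⁻¹ *ᵥ u))⁻¹ • (S⁻¹ *ᵥ u) := by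
  set x := S⁻¹ *ᵥ u
  set d := 1 + v ⬝ᵥ x
  have hAx : (vecMulVec u v + S) *ᵥ x = d • u := by
    rw [add_mulVec, vecMulVec_mulVec, mulVec_mulVec, mul_nonsing_inv _ hS, one_mulVec,
      op_smul_eq_smul, add_smul, one_smul, add_comm]
  have hx : x = d • ((vecMulVec u v + S)⁻¹ *ᵥ u) := by
    rw [← mulVec_smul, ← hAx, mulVec_mulVec, nonsing_inv_mul _ hA, one_mulVec]
  have hd : d ≠ 0 := by
    intro h0
    have hx0 : x = 0 := by rw [hx, h0, zero_smul]
    simp [d, hx0] at h0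
  rw [hx, smul_smul, inv_mul_cancel₀ hd, one_smul]

theorem smul_inv_smul_mulVec {K ι : Type*} [Field K] [Fintype ι] [DecidableEq ι] {c : K}
    (hc : c ≠ 0) {A : Matrix ι ι K} (hA : IsUnit A.det) (b : ι → K) :
    c • ((c • A)⁻¹ *ᵥ b) = A⁻¹ *ᵥ b := by
  have := invertibleOfNonzero hc
  rw [inv_smul _ _ hA, invOf_eq_inv, smul_mulVec, smul_smul, mul_inv_cancel₀ hc, one_smul]

theorem inverse_regression_sample_equivalence_general
    (n L : ℕ) (hn : 0 < n)
    (z : Fin n → ℝ) (y : Fin n → Fin L → ℝ)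
    (zbar : ℝ) (hzbar : zbar = (∑ i, z i) / n)
    (hzpos : 0 < zbar) (hzlt : zbar < 1)
    (ybar : Fin L → ℝ) (hybar : ybar = fun j => (∑ i, y i j) / n)
    (Syy : Matrix (Fin L) (Fin L) ℝ)
    (hSyy : Syy = (n : ℝ)⁻¹ • ∑ i, vecMulVec (y i - ybar) (y i - ybar))
    (Syz : Fin L → ℝ)
    (hSyz : Syz = fun j => (n : ℝ)⁻¹ * ∑ i, (y i j - ybar j) * (z i - zbar))
    (ybar1 ybar0 : Fin L → ℝ)
    (hybar1 : ybar1 = fun j => (∑ i, z i * y i j) / (∑ i, z i))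
    (hybar0 : ybar0 = fun j => (∑ i, (1 - z i) * y i j) / (∑ i, (1 - z i)))
    (τhat : Fin L → ℝ) (hτhat : τhat = ybar1 - ybar0)
    (βhat : Fin L → ℝ) (hβhat : βhat = Syy⁻¹ *ᵥ Syz)
    (cov1 cov0 : Matrix (Fin L) (Fin L) ℝ)
    (hcov1 : cov1 = ((n : ℝ) * zbar)⁻¹ •
      ∑ i, z i • vecMulVec (y i - ybar1) (y i - ybar1))
    (hcov0 : cov0 = ((n : ℝ) * (1 - zbar))⁻¹ •
      ∑ i, (1 - z i) • vecMulVec (y i - ybar0) (y i - ybar0))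
    (Sigmahat : Matrix (Fin L) (Fin L) ℝ)
    (hSigmahat : Sigmahat = (1 - zbar)⁻¹ • cov1 + zbar⁻¹ • cov0)
    (hSyyInv : IsUnit Syy.det) :
    βhat = (zbar * (1 - zbar)) • (Syy⁻¹ *ᵥ τhat) ∧
    Syy = (zbar * (1 - zbar)) • (vecMulVec τhat τhat + Sigmahat) ∧
    (IsUnit Sigmahat.det →
      βhat = (1 + τhat ⬝ᵥ (Sigmahat⁻¹ *ᵥ τhat))⁻¹ • (Sigmahat⁻¹ *ᵥ τhat)) := by
  have hn0 : (n : ℝ) ≠ 0 := Nat.cast_ne_zero.mpr hn.ne'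
  have hz1 : 1 - zbar ≠ 0 := by linarith
  have hc : zbar * (1 - zbar) ≠ 0 := mul_ne_zero hzpos.ne' hz1
  have hsum1 : ∑ i, z i = n * zbar := by rw [hzbar]; field_simp
  have hsum0 : ∑ i, (1 - z i) = n * (1 - zbar) := by
    simp only [Finset.sum_sub_distrib, Finset.sum_const, Finset.card_univ, Fintype.card_fin,
      nsmul_eq_mul, mul_one, hsum1]
    ring
  have hmean : ∑ i, y i = (Fintype.card (Fin n) : ℝ) • ybar := by
    rw [Fintype.card_fin]; exact sum_eq_smul_of_eq_fun_div hn0 hybar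
  have hmean1 : ∑ i, z i • y i = (∑ i, z i) • ybar1 :=
    sum_eq_smul_of_eq_fun_div (by rw [hsum1]; positivity) hybar1
  have hmean0 : ∑ i, (1 - z i) • y i = (∑ i, (1 - z i)) • ybar0 :=
    sum_eq_smul_of_eq_fun_div (by rw [hsum0]; exact mul_ne_zero hn0 hz1) hybar0
  have hybar_mix : ybar = zbar • ybar1 + (1 - zbar) • ybar0 := by
    apply smul_right_injective _ hn0
    simp only [smul_add, smul_smul, ← hsum1, ← hsum0, ← hmean1, ← hmean0,
      ← sum_eq_sum_smul_add_sum_one_sub_smul, hmean, Fintype.card_fin]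
  have hdev1 : ybar1 - ybar = (1 - zbar) • τhat := by rw [hybar_mix, hτhat]; module
  have hdev0 : ybar0 - ybar = -zbar • τhat := by rw [hybar_mix, hτhat]; module
  have hSyz' : Syz = (zbar * (1 - zbar)) • τhat := by
    have hcross : Syz = (n : ℝ)⁻¹ • ∑ i, (z i - zbar) • (y i - ybar) := by
      ext j
      simp [hSyz, Finset.sum_apply, mul_comm]
    rw [hcross, sum_sub_smul_sub_eq zbar hmean hmean1, hdev1, hsum1, smul_smul, smul_smul]
    congr 1
    field_simp
  have hβ : βhat = (zbar * (1 - zbar)) • (Syy⁻¹ *ᵥ τhat) := by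
    rw [hβhat, hSyz', mulVec_smul]
  have hSyy' : Syy = (zbar * (1 - zbar)) • (vecMulVec τhat τhat + Sigmahat) := by
    have hW1 : ∑ i, z i • vecMulVec (y i - ybar1) (y i - ybar1) = ((n : ℝ) * zbar) • cov1 := by
      rw [hcov1, smul_inv_smul₀ (by positivity)]
    have hW0 : ∑ i, (1 - z i) • vecMulVec (y i - ybar0) (y i - ybar0) =
        ((n : ℝ) * (1 - zbar)) • cov0 := by
      rw [hcov0, smul_inv_smul₀ (mul_ne_zero hn0 hz1)]
    rw [hSyy, sum_vecMulVec_sub_eq_within_add_between hmean1 hmean0, hW1, hW0, hdev1, hdev0, hsum1,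
      hsum0, hSigmahat]
    simp only [smul_vecMulVec, vecMulVec_smul]
    match_scalars <;> field_simp
    ring
  refine ⟨hβ, hSyy', fun hSigma => ?_⟩
  have hA : IsUnit (vecMulVec τhat τhat + Sigmahat).det := by
    rw [hSyy', det_smul] at hSyyInv
    exact isUnit_of_mul_isUnit_right hSyyInv
  rw [hβ, hSyy', smul_inv_smul_mulVec hc hA, inv_vecMulVec_add_mulVec τhat τhat hSigma hA]

/-- Sample-level part of Proposition 1: equivalence between the inverse least-squares
coefficient `β̂ = S_yy⁻¹ S_yz` and the difference-in-means estimator `τ̂`. -/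
theorem inverse_regression_sample_equivalence
    (n L : ℕ) (hn : 0 < n)
    (z : Fin n → ℝ) (y : Fin n → Fin L → ℝ)
    (hz01 : ∀ i, z i = 0 ∨ z i = 1)
    (zbar : ℝ) (hzbar : zbar = (∑ i, z i) / n)
    (hzpos : 0 < zbar) (hzlt : zbar < 1)
    (ybar : Fin L → ℝ) (hybar : ybar = fun j => (∑ i, y i j) / n)
    (Syy : Matrix (Fin L) (Fin L) ℝ)
    (hSyy : Syy = (n : ℝ)⁻¹ • ∑ i, vecMulVec (y i - ybar) (y i - ybar))
    (Syz : Fin L → ℝ)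
    (hSyz : Syz = fun j => (n : ℝ)⁻¹ * ∑ i, (y i j - ybar j) * (z i - zbar))
    (ybar1 ybar0 : Fin L → ℝ)
    (hybar1 : ybar1 = fun j => (∑ i, z i * y i j) / (∑ i, z i))
    (hybar0 : ybar0 = fun j => (∑ i, (1 - z i) * y i j) / (∑ i, (1 - z i)))
    (τhat : Fin L → ℝ) (hτhat : τhat = ybar1 - ybar0)
    (βhat : Fin L → ℝ) (hβhat : βhat = Syy⁻¹ *ᵥ Syz)
    (cov1 cov0 : Matrix (Fin L) (Fin L) ℝ)
    (hcov1 : cov1 = ((n : ℝ) * zbar)⁻¹ •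
      ∑ i, z i • vecMulVec (y i - ybar1) (y i - ybar1))
    (hcov0 : cov0 = ((n : ℝ) * (1 - zbar))⁻¹ •
      ∑ i, (1 - z i) • vecMulVec (y i - ybar0) (y i - ybar0))
    (Sigmahat : Matrix (Fin L) (Fin L) ℝ)
    (hSigmahat : Sigmahat = (1 - zbar)⁻¹ • cov1 + zbar⁻¹ • cov0)
    (hSyyInv : IsUnit Syy.det) :
    βhat = (zbar * (1 - zbar)) • (Syy⁻¹ *ᵥ τhat) ∧
    Syy = (zbar * (1 - zbar)) • (vecMulVec τhat τhat + Sigmahat) ∧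
    (IsUnit Sigmahat.det →
      βhat = (1 + τhat ⬝ᵥ (Sigmahat⁻¹ *ᵥ τhat))⁻¹ • (Sigmahat⁻¹ *ᵥ τhat)) :=
  inverse_regression_sample_equivalence_general n L hn z y zbar hzbar hzpos hzlt ybar hybar Syy hSyy
    Syz hSyz ybar1 ybar0 hybar1 hybar0 τhat hτhat βhat hβhat cov1 cov0 hcov1 hcov0 Sigmahat
    hSigmahat hSyyInv
end

section
/- Population-level part of Proposition 1: Under complete randomization, i.e., Z independent of (Y(1), Y(0)) with treatment probability p = P(Z=1) ∈ (0,1), and assuming cov(Y) is invertible, the population inverse least-squares coefficient satisfies β = var(Z) cov(Y)^{-1} τ. Moreover, cov(Y) = p(1−p)[ττᵀ + Σ], where Σ = (1−p)^{-1} cov{Y(1)} + p^{-1} cov{Y(0)}, so that when Σ is invertible, β = Σ^{-1}τ / (1 + τᵀ Σ^{-1} τ). In particular β = 0 if and only if τ = 0. -/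
/-!
Because `Z ∈ {0, 1}` is independent of `(Y(1), Y(0))`, every moment of `Y` splits as
`p · (moment of Y(1)) + (1 - p) · (moment of Y(0))`. This yields the law of total covariance
`cov Y = p cov Y(1) + (1 - p) cov Y(0) + p(1 - p) ττᵀ = p(1 - p)(ττᵀ + Σ)` and
`cov(Y, Z) = p(1 - p) τ = var(Z) τ`. The factor `p(1 - p)` cancels in `β = cov(Y)⁻¹ cov(Y, Z)`,
and the Sherman–Morrison formula inverts the rank-one perturbation `Σ + ττᵀ`.
-/

open MeasureTheory ProbabilityTheory Matrix

section ZeroOne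

theorem mix_mul_mix {z : ℝ} (hz : z = 0 ∨ z = 1) (a₁ a₀ b₁ b₀ : ℝ) :
    (z * a₁ + (1 - z) * a₀) * (z * b₁ + (1 - z) * b₀) = z * (a₁ * b₁) + (1 - z) * (a₀ * b₀) := by
  rcases hz with rfl | rfl <;> ring

variable {Ω : Type*} [MeasurableSpace Ω] {μ : Measure Ω} {Z : Ω → ℝ}

theorem integral_eq_measureReal_of_zero_or_one (hZ : Measurable Z)
    (hZ01 : ∀ ω, Z ω = 0 ∨ Z ω = 1) : μ[Z] = μ.real {ω | Z ω = 1} := by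
  have hs : MeasurableSet {ω | Z ω = 1} := hZ (measurableSet_singleton 1)
  rw [← integral_indicator_one hs]
  congr 1
  funext ω
  rcases hZ01 ω with h | h <;> simp [h]

theorem memLp_of_zero_or_one [IsFiniteMeasure μ] (hZ : AEStronglyMeasurable Z μ)
    (hZ01 : ∀ ω, Z ω = 0 ∨ Z ω = 1) (q : ENNReal) : MemLp Z q μ :=
  .of_bound hZ 1 (ae_of_all _ fun ω => by rcases hZ01 ω with h | h <;> simp [h])

theorem variance_of_zero_or_one [IsProbabilityMeasure μ] (hZ : AEStronglyMeasurable Z μ)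
    (hZ01 : ∀ ω, Z ω = 0 ∨ Z ω = 1) : Var[Z; μ] = μ[Z] * (1 - μ[Z]) := by
  have hZ2 : Z ^ 2 = Z := funext fun ω => by rcases hZ01 ω with h | h <;> simp [h]
  rw [variance_eq_sub (memLp_of_zero_or_one hZ hZ01 2), hZ2]
  ring

end ZeroOne

section Mixture

variable {Ω β ι : Type*} [MeasurableSpace Ω] [MeasurableSpace β] {μ : Measure Ω} {Z : Ω → ℝ}

theorem integral_mix_of_indepFun {W : Ω → β} (hZ : Integrable Z μ) (hind : IndepFun Z W μ)
    {f g : β → ℝ} (hf : Measurable f) (hg : Measurable g)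
    (hfW : Integrable (fun ω => f (W ω)) μ) (hgW : Integrable (fun ω => g (W ω)) μ) :
    ∫ ω, (Z ω * f (W ω) + (1 - Z ω) * g (W ω)) ∂μ =
      μ[Z] * ∫ ω, f (W ω) ∂μ + (1 - μ[Z]) * ∫ ω, g (W ω) ∂μ := by
  have hZf : IndepFun Z (fun ω => f (W ω)) μ := hind.comp measurable_id hf
  have hZg : IndepFun Z (fun ω => g (W ω)) μ := hind.comp measurable_id hg
  have hZfW : Integrable (fun ω => Z ω * f (W ω)) μ := hZf.integrable_mul hZ hfW
  have hZgW : Integrable (fun ω => Z ω * g (W ω)) μ := hZg.integrable_mul hZ hgW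
  have hEf : ∫ ω, Z ω * f (W ω) ∂μ = μ[Z] * ∫ ω, f (W ω) ∂μ :=
    hZf.integral_mul_eq_mul_integral hZ.1 hfW.1
  have hEg : ∫ ω, Z ω * g (W ω) ∂μ = μ[Z] * ∫ ω, g (W ω) ∂μ :=
    hZg.integral_mul_eq_mul_integral hZ.1 hgW.1
  simp_rw [sub_mul, one_mul]
  rw [integral_add (g := fun ω => g (W ω) - Z ω * g (W ω)) hZfW (hgW.sub hZgW),
    integral_sub hgW hZgW, hEf, hEg]

theorem memLp_mix [IsFiniteMeasure μ] (hZ : Measurable Z) (hZ01 : ∀ ω, Z ω = 0 ∨ Z ω = 1)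
    {q : ENNReal} {U₁ U₀ : Ω → ℝ} (h₁ : MemLp U₁ q μ) (h₀ : MemLp U₀ q μ) :
    MemLp (fun ω => Z ω * U₁ ω + (1 - Z ω) * U₀ ω) q μ :=
  have hZ' := memLp_of_zero_or_one hZ.aestronglyMeasurable hZ01 ⊤ (μ := μ)
  (h₁.mul' hZ').add (h₀.mul' ((memLp_const 1).sub hZ'))

noncomputable def covarianceMatrix (X : Ω → ι → ℝ) (μ : Measure Ω) : Matrix ι ι ℝ :=
  Matrix.of fun i j => cov[fun ω => X ω i, fun ω => X ω j; μ]

variable {X₁ X₀ : Ω → ι → ℝ} [IsProbabilityMeasure μ]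

theorem covarianceMatrix_mix (hZ : Measurable Z) (hZ01 : ∀ ω, Z ω = 0 ∨ Z ω = 1)
    (hind : IndepFun Z (fun ω => (X₁ ω, X₀ ω)) μ)
    (h₁ : ∀ i, MemLp (fun ω => X₁ ω i) 2 μ) (h₀ : ∀ i, MemLp (fun ω => X₀ ω i) 2 μ) :
    covarianceMatrix (fun ω i => Z ω * X₁ ω i + (1 - Z ω) * X₀ ω i) μ =
      μ[Z] • covarianceMatrix X₁ μ + (1 - μ[Z]) • covarianceMatrix X₀ μ +
        (μ[Z] * (1 - μ[Z])) • vecMulVec (fun i => ∫ ω, (X₁ ω i - X₀ ω i) ∂μ)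
          (fun i => ∫ ω, (X₁ ω i - X₀ ω i) ∂μ) := by
  have hZi : Integrable Z μ :=
    (memLp_of_zero_or_one hZ.aestronglyMeasurable hZ01 1).integrable le_rfl
  have hmean : ∀ i, ∫ ω, (Z ω * X₁ ω i + (1 - Z ω) * X₀ ω i) ∂μ =
      μ[Z] * μ[fun ω => X₁ ω i] + (1 - μ[Z]) * μ[fun ω => X₀ ω i] := fun i =>
    integral_mix_of_indepFun (f := fun y => y.1 i) (g := fun y => y.2 i) hZi hind
      (by fun_prop) (by fun_prop) ((h₁ i).integrable one_le_two) ((h₀ i).integrable one_le_two)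
  ext i j
  have hsecond : ∫ ω, (Z ω * X₁ ω i + (1 - Z ω) * X₀ ω i) *
        (Z ω * X₁ ω j + (1 - Z ω) * X₀ ω j) ∂μ =
      μ[Z] * μ[fun ω => X₁ ω i * X₁ ω j] + (1 - μ[Z]) * μ[fun ω => X₀ ω i * X₀ ω j] := by
    simp_rw [mix_mul_mix (hZ01 _)]
    exact integral_mix_of_indepFun (f := fun y => y.1 i * y.1 j) (g := fun y => y.2 i * y.2 j)
      hZi hind (by fun_prop) (by fun_prop) ((h₁ i).integrable_mul (h₁ j))
      ((h₀ i).integrable_mul (h₀ j))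
  simp only [covarianceMatrix, of_apply, Matrix.add_apply, Matrix.smul_apply, vecMulVec_apply,
    smul_eq_mul]
  rw [covariance_eq_sub (memLp_mix hZ hZ01 (h₁ i) (h₀ i)) (memLp_mix hZ hZ01 (h₁ j) (h₀ j)),
    covariance_eq_sub (h₁ i) (h₁ j), covariance_eq_sub (h₀ i) (h₀ j),
    integral_sub ((h₁ i).integrable one_le_two) ((h₀ i).integrable one_le_two),
    integral_sub ((h₁ j).integrable one_le_two) ((h₀ j).integrable one_le_two)]
  simp only [Pi.mul_apply]
  rw [hsecond, hmean, hmean]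
  ring

theorem covariance_mix_selector (hZ : Measurable Z) (hZ01 : ∀ ω, Z ω = 0 ∨ Z ω = 1)
    (hind : IndepFun Z (fun ω => (X₁ ω, X₀ ω)) μ)
    (h₁ : ∀ i, MemLp (fun ω => X₁ ω i) 2 μ) (h₀ : ∀ i, MemLp (fun ω => X₀ ω i) 2 μ) :
    (fun i => cov[fun ω => Z ω * X₁ ω i + (1 - Z ω) * X₀ ω i, Z; μ]) =
      (μ[Z] * (1 - μ[Z])) • fun i => ∫ ω, (X₁ ω i - X₀ ω i) ∂μ := by
  have hZ2 := memLp_of_zero_or_one hZ.aestronglyMeasurable hZ01 2 (μ := μ)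
  have hZi : Integrable Z μ := hZ2.integrable one_le_two
  funext i
  have hindi : IndepFun Z (fun ω => X₁ ω i) μ :=
    hind.comp measurable_id ((measurable_pi_apply i).comp measurable_fst)
  have hselect :
      (fun ω => Z ω * X₁ ω i + (1 - Z ω) * X₀ ω i) * Z = fun ω => Z ω * X₁ ω i := by
    funext ω
    rcases hZ01 ω with h | h <;> simp [h]
  have hcross : ∫ ω, Z ω * X₁ ω i ∂μ = μ[Z] * μ[fun ω => X₁ ω i] :=
    hindi.integral_mul_eq_mul_integral hZ.aestronglyMeasurable (h₁ i).1
  rw [covariance_eq_sub (memLp_mix hZ hZ01 (h₁ i) (h₀ i)) hZ2, hselect, hcross,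
    integral_mix_of_indepFun (f := fun y => y.1 i) (g := fun y => y.2 i) hZi hind
      (by fun_prop) (by fun_prop) ((h₁ i).integrable one_le_two) ((h₀ i).integrable one_le_two),
    Pi.smul_apply, smul_eq_mul,
    integral_sub ((h₁ i).integrable one_le_two) ((h₀ i).integrable one_le_two)]
  ring

end Mixture

namespace Matrix

variable {n K : Type*} [Fintype n] [DecidableEq n] [Field K]

theorem det_add_vecMulVec {A : Matrix n n K} (hA : IsUnit A.det) (u v : n → K) :
    (A + vecMulVec u v).det = A.det * (1 + v ⬝ᵥ A⁻¹ *ᵥ u) := by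
  rw [vecMulVec_eq Unit, det_add_replicateCol_mul_replicateRow hA, Matrix.mul_assoc,
    ← replicateCol_mulVec, det_unique (1 + _ : Matrix Unit Unit K), add_apply, one_apply_eq,
    replicateRow_mul_replicateCol_apply]

theorem add_vecMulVec_inv_mulVec {A : Matrix n n K} (hA : IsUnit A.det) (u v : n → K) :
    (A + vecMulVec u v)⁻¹ *ᵥ u = (1 + v ⬝ᵥ A⁻¹ *ᵥ u)⁻¹ • (A⁻¹ *ᵥ u) := by
  have hdet := det_add_vecMulVec hA u v
  by_cases hc : 1 + v ⬝ᵥ A⁻¹ *ᵥ u = 0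
  -- then `A + vecMulVec u v` is singular, and both sides are `0` by the junk-value conventions
  · rw [nonsing_inv_apply_not_isUnit _ (by simp [hdet, hc]), hc]
    simp
  have hB : IsUnit (A + vecMulVec u v).det := by
    simpa [hdet, hc] using hA.ne_zero
  have hBw : (A + vecMulVec u v) *ᵥ ((1 + v ⬝ᵥ A⁻¹ *ᵥ u)⁻¹ • (A⁻¹ *ᵥ u)) = u := by
    rw [mulVec_smul, add_mulVec, vecMulVec_mulVec, mulVec_mulVec, mul_nonsing_inv _ hA,
      one_mulVec, op_smul_eq_smul, inv_smul_eq_iff₀ hc, add_smul, one_smul]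
  calc _ = (A + vecMulVec u v)⁻¹ *ᵥ
        ((A + vecMulVec u v) *ᵥ ((1 + v ⬝ᵥ A⁻¹ *ᵥ u)⁻¹ • (A⁻¹ *ᵥ u))) := by rw [hBw]
    _ = _ := by rw [mulVec_mulVec, nonsing_inv_mul _ hB, one_mulVec]

theorem inv_smul_mulVec_smul (A : Matrix n n K) {c : K} (hc : c ≠ 0) (v : n → K) :
    (c • A)⁻¹ *ᵥ (c • v) = A⁻¹ *ᵥ v := by
  by_cases hA : IsUnit A.det
  · have := invertibleOfNonzero hc
    rw [inv_smul _ c hA, smul_mulVec, mulVec_smul, smul_smul, invOf_eq_inv,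
      inv_mul_cancel₀ hc, one_smul]
  · have : ¬ IsUnit (c • A).det := by simpa [det_smul, hc] using hA
    rw [nonsing_inv_apply_not_isUnit _ this, nonsing_inv_apply_not_isUnit _ hA]
    simp

end Matrix

theorem inverse_regression_population_equivalence_general
    {Ω : Type*} [MeasurableSpace Ω] (μ : Measure Ω) [IsProbabilityMeasure μ]
    (L : ℕ) (Z : Ω → ℝ) (Y1 Y0 : Ω → Fin L → ℝ)
    (hZmeas : Measurable Z)
    (hZ01 : ∀ ω, Z ω = 0 ∨ Z ω = 1)
    (hY1L2 : MemLp Y1 2 μ) (hY0L2 : MemLp Y0 2 μ)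
    -- complete randomization: Z ⫫ (Y(1), Y(0))
    (hindep : IndepFun Z (fun ω => (Y1 ω, Y0 ω)) μ)
    (p : ℝ) (hp : p = (μ {ω | Z ω = 1}).toReal) (hp0 : 0 < p) (hp1 : p < 1)
    -- observed outcome Y = Z Y(1) + (1 − Z) Y(0)
    (Y : Ω → Fin L → ℝ)
    (hY : Y = fun ω j => Z ω * Y1 ω j + (1 - Z ω) * Y0 ω j)
    -- average treatment effect
    (τ : Fin L → ℝ) (hτ : τ = fun j => ∫ ω, (Y1 ω j - Y0 ω j) ∂μ)
    -- moments of the observed data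
    (EZ : ℝ) (hEZ : EZ = ∫ ω, Z ω ∂μ)
    (varZ : ℝ) (hvarZ : varZ = ∫ ω, (Z ω - EZ) ^ 2 ∂μ)
    (EY : Fin L → ℝ) (hEY : EY = fun j => ∫ ω, Y ω j ∂μ)
    (covY : Matrix (Fin L) (Fin L) ℝ)
    (hcovY : covY = Matrix.of fun i j => ∫ ω, (Y ω i - EY i) * (Y ω j - EY j) ∂μ)
    (covYZ : Fin L → ℝ)
    (hcovYZ : covYZ = fun i => ∫ ω, (Y ω i - EY i) * (Z ω - EZ) ∂μ)
    -- population inverse least-squares coefficient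
    (β : Fin L → ℝ) (hβ : β = covY⁻¹ *ᵥ covYZ)
    -- covariances of the potential outcomes
    (EY1 EY0 : Fin L → ℝ)
    (hEY1 : EY1 = fun j => ∫ ω, Y1 ω j ∂μ) (hEY0 : EY0 = fun j => ∫ ω, Y0 ω j ∂μ)
    (covY1 covY0 : Matrix (Fin L) (Fin L) ℝ)
    (hcovY1 : covY1 = Matrix.of fun i j => ∫ ω, (Y1 ω i - EY1 i) * (Y1 ω j - EY1 j) ∂μ)
    (hcovY0 : covY0 = Matrix.of fun i j => ∫ ω, (Y0 ω i - EY0 i) * (Y0 ω j - EY0 j) ∂μ)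
    (Sigma : Matrix (Fin L) (Fin L) ℝ)
    (hSigma : Sigma = (1 - p)⁻¹ • covY1 + p⁻¹ • covY0)
    (hcovYInv : IsUnit covY.det) :
    β = varZ • (covY⁻¹ *ᵥ τ) ∧
    covY = (p * (1 - p)) • (vecMulVec τ τ + Sigma) ∧
    (IsUnit Sigma.det →
      β = (1 + τ ⬝ᵥ (Sigma⁻¹ *ᵥ τ))⁻¹ • (Sigma⁻¹ *ᵥ τ)) ∧
    (β = 0 ↔ τ = 0) := by
  have hpq : p * (1 - p) ≠ 0 := mul_ne_zero hp0.ne' (sub_ne_zero.2 hp1.ne')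
  have hEZp : μ[Z] = p := by
    rw [hp, integral_eq_measureReal_of_zero_or_one hZmeas hZ01]
    rfl
  have hvarZp : varZ = p * (1 - p) := by
    rw [hvarZ, hEZ, ← variance_eq_integral hZmeas.aemeasurable,
      variance_of_zero_or_one hZmeas.aestronglyMeasurable hZ01, hEZp]
  have hcovYmix : covY = p • covY1 + (1 - p) • covY0 + (p * (1 - p)) • vecMulVec τ τ := by
    subst hcovY hEY hY hcovY1 hcovY0 hEY1 hEY0 hτ
    rw [← hEZp]
    exact covarianceMatrix_mix hZmeas hZ01 hindep hY1L2.eval hY0L2.eval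
  have hcovYZp : covYZ = (p * (1 - p)) • τ := by
    subst hcovYZ hEY hY hEZ hτ
    rw [← hEZp]
    exact covariance_mix_selector hZmeas hZ01 hindep hY1L2.eval hY0L2.eval
  have hcovYSigma : covY = (p * (1 - p)) • (vecMulVec τ τ + Sigma) := by
    ext i j
    simp only [hcovYmix, hSigma, Matrix.add_apply, Matrix.smul_apply, smul_eq_mul]
    field_simp [hp0.ne', sub_ne_zero.2 hp1.ne']
    ring
  have hβτ : β = varZ • (covY⁻¹ *ᵥ τ) := by rw [hβ, hcovYZp, hvarZp, mulVec_smul]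
  refine ⟨hβτ, hcovYSigma, fun hSigmaInv => ?_, ?_⟩
  · rw [hβ, hcovYZp, hcovYSigma, inv_smul_mulVec_smul _ hpq, add_comm,
      add_vecMulVec_inv_mulVec hSigmaInv]
  · have hinj := mulVec_injective_iff_isUnit.2
      (isUnit_nonsing_inv_iff.2 ((isUnit_iff_isUnit_det covY).2 hcovYInv))
    rw [hβτ, hvarZp, smul_eq_zero, or_iff_right hpq, hinj.eq_iff' (mulVec_zero _)]

/-- Population-level part of Proposition 1: under complete randomization,
`β = var(Z) cov(Y)⁻¹ τ`, `cov(Y) = p(1−p)[ττᵀ + Σ]`, and hence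
`β = Σ⁻¹τ/(1 + τᵀΣ⁻¹τ)` when `Σ` is invertible; in particular `β = 0 ↔ τ = 0`. -/
theorem inverse_regression_population_equivalence
    {Ω : Type*} [MeasurableSpace Ω] (μ : Measure Ω) [IsProbabilityMeasure μ]
    (L : ℕ) (Z : Ω → ℝ) (Y1 Y0 : Ω → Fin L → ℝ)
    (hZmeas : Measurable Z) (hY1meas : Measurable Y1) (hY0meas : Measurable Y0)
    (hZ01 : ∀ ω, Z ω = 0 ∨ Z ω = 1)
    (hY1L2 : MemLp Y1 2 μ) (hY0L2 : MemLp Y0 2 μ)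
    -- complete randomization: Z ⫫ (Y(1), Y(0))
    (hindep : IndepFun Z (fun ω => (Y1 ω, Y0 ω)) μ)
    (p : ℝ) (hp : p = (μ {ω | Z ω = 1}).toReal) (hp0 : 0 < p) (hp1 : p < 1)
    -- observed outcome Y = Z Y(1) + (1 − Z) Y(0)
    (Y : Ω → Fin L → ℝ)
    (hY : Y = fun ω j => Z ω * Y1 ω j + (1 - Z ω) * Y0 ω j)
    -- average treatment effect
    (τ : Fin L → ℝ) (hτ : τ = fun j => ∫ ω, (Y1 ω j - Y0 ω j) ∂μ)
    -- moments of the observed data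
    (EZ : ℝ) (hEZ : EZ = ∫ ω, Z ω ∂μ)
    (varZ : ℝ) (hvarZ : varZ = ∫ ω, (Z ω - EZ) ^ 2 ∂μ)
    (EY : Fin L → ℝ) (hEY : EY = fun j => ∫ ω, Y ω j ∂μ)
    (covY : Matrix (Fin L) (Fin L) ℝ)
    (hcovY : covY = Matrix.of fun i j => ∫ ω, (Y ω i - EY i) * (Y ω j - EY j) ∂μ)
    (covYZ : Fin L → ℝ)
    (hcovYZ : covYZ = fun i => ∫ ω, (Y ω i - EY i) * (Z ω - EZ) ∂μ)
    -- population inverse least-squares coefficient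
    (β : Fin L → ℝ) (hβ : β = covY⁻¹ *ᵥ covYZ)
    -- covariances of the potential outcomes
    (EY1 EY0 : Fin L → ℝ)
    (hEY1 : EY1 = fun j => ∫ ω, Y1 ω j ∂μ) (hEY0 : EY0 = fun j => ∫ ω, Y0 ω j ∂μ)
    (covY1 covY0 : Matrix (Fin L) (Fin L) ℝ)
    (hcovY1 : covY1 = Matrix.of fun i j => ∫ ω, (Y1 ω i - EY1 i) * (Y1 ω j - EY1 j) ∂μ)
    (hcovY0 : covY0 = Matrix.of fun i j => ∫ ω, (Y0 ω i - EY0 i) * (Y0 ω j - EY0 j) ∂μ)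
    (Sigma : Matrix (Fin L) (Fin L) ℝ)
    (hSigma : Sigma = (1 - p)⁻¹ • covY1 + p⁻¹ • covY0)
    (hcovYInv : IsUnit covY.det) :
    β = varZ • (covY⁻¹ *ᵥ τ) ∧
    covY = (p * (1 - p)) • (vecMulVec τ τ + Sigma) ∧
    (IsUnit Sigma.det →
      β = (1 + τ ⬝ᵥ (Sigma⁻¹ *ᵥ τ))⁻¹ • (Sigma⁻¹ *ᵥ τ)) ∧
    (β = 0 ↔ τ = 0) :=
  inverse_regression_population_equivalence_general μ L Z Y1 Y0 hZmeas hZ01 hY1L2 hY0L2 hindep p hp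
    hp0 hp1 Y hY τ hτ EZ hEZ varZ hvarZ EY hEY covY hcovY covYZ hcovYZ β hβ EY1 EY0 hEY1 hEY0 covY1
    covY0 hcovY1 hcovY0 Sigma hSigma hcovYInv
end

section
/- Population-level part of Proposition 2: Under stratified randomization, i.e., Z independent of (Y(1), Y(0)) given C, with π_s = P(C=s) > 0 and p_[s] = P(Z=1 | C=s) ∈ (0,1) for all s, and E{cov(Y | C)} invertible, the population coefficient satisfies β_SR = E{var(Z | C)} E{cov(Y | C)}^{-1} τ_SR, where E{var(Z | C)} = Σ_s π_s p_[s](1−p_[s]) and E{cov(Y | C)} = Σ_s π_s [ p_[s](1−p_[s]) τ_[s] τ_[s]ᵀ + p_[s] cov{Y(1) | C=s} + (1−p_[s]) cov{Y(0) | C=s} ]. In particular β_SR = 0 if and only if τ_SR = 0. -/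
/-!
Inside a stratum `Z` is a Bernoulli(`p`) switch independent of `(Y(1), Y(0))`. Since `Z ∈ {0, 1}`,
every integrand built from the observed `Y` splits as `Z g(Y(1), Y(0)) + (1 - Z) h(Y(1), Y(0))`, so
its conditional mean is `p E[g] + (1 - p) E[h]`. Applied to the centred products this
gives `var(Z | C) = p(1-p)`, `E[(Y - E[Y | C]) Z | C] = p(1-p) τ` and the mixture covariance formula
`cov(Y | C) = p(1-p) τ τᵀ + p cov(Y(1) | C) + (1-p) cov(Y(0) | C)`. Decomposing `μ` along the
strata, `μ = ∑ₛ πₛ μ[|C = s]`, turns the Frisch–Waugh–Lovell moments `E[Ỹ Ỹᵀ]` and `E[Ỹ Z]` into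
`E{cov(Y | C)}` and `E{var(Z | C)} τ_SR`. Since `E{var(Z | C)} > 0` and `E{cov(Y | C)}` is
invertible, `β_SR` vanishes exactly when `τ_SR` does.
-/

open MeasureTheory ProbabilityTheory Matrix Finset

section Stratification
variable {Ω : Type*} [MeasurableSpace Ω] {μ : Measure Ω}

lemma MeasureTheory.MemLp.cond {E : Type*} [NormedAddCommGroup E] {f : Ω → E} {p : ENNReal}
    (hf : MemLp f p μ) {A : Set Ω} (hA : μ A ≠ 0) : MemLp f p μ[|A] :=
  (hf.restrict A).smul_measure (ENNReal.inv_ne_top.mpr hA)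

lemma integral_eq_sum_measureReal_smul_integral_cond [IsFiniteMeasure μ]
    {ι E : Type*} [Fintype ι] [MeasurableSpace ι] [MeasurableSingletonClass ι]
    [NormedAddCommGroup E] [NormedSpace ℝ E]
    {C : Ω → ι} (hC : Measurable C) {F : ι → Ω → E}
    (hF : ∀ s, Integrable (F s) μ[|{ω | C ω = s}]) :
    ∫ ω, F (C ω) ω ∂μ = ∑ s, μ.real {ω | C ω = s} • ∫ ω, F s ω ∂μ[|{ω | C ω = s}] := by
  have hfiber : ∀ s, (fun ω => F (C ω) ω) =ᵐ[μ[|{ω | C ω = s}]] F s := fun s =>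
    (ae_cond_mem (hC (measurableSet_singleton s))).mono fun ω hω =>
      congrArg (F · ω) (hω : C ω = s)
  have hμ : μ = ∑ s, μ {ω | C ω = s} • μ[|{ω | C ω = s}] := (sum_meas_smul_cond_fiber hC μ).symm
  conv_lhs => rw [hμ]
  rw [integral_finsetSum_measure fun s _ =>
    ((hF s).congr (hfiber s).symm).smul_measure (measure_ne_top μ {ω | C ω = s})]
  simp_rw [integral_smul_measure, integral_congr_ae (hfiber _), measureReal_def]

end Stratification

lemma integral_sub_mul_sub_eq_covariance_add {Ω : Type*} [MeasurableSpace Ω] {μ : Measure Ω}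
    [IsProbabilityMeasure μ] {X Y : Ω → ℝ} (hX : MemLp X 2 μ) (hY : MemLp Y 2 μ) (a b : ℝ) :
    ∫ ω, (X ω - a) * (Y ω - b) ∂μ = cov[X, Y; μ] + (μ[X] - a) * (μ[Y] - b) := by
  have hXi := hX.integrable one_le_two
  have hYi := hY.integrable one_le_two
  have h := covariance_eq_sub (X := fun ω => X ω - a) (Y := fun ω => Y ω - b)
    (hX.sub (memLp_const a)) (hY.sub (memLp_const b))
  rw [covariance_sub_const_left hXi, covariance_sub_const_right hYi,
    integral_sub hXi (integrable_const a), integral_sub hYi (integrable_const b)] at h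
  simp only [integral_const, probReal_univ, one_smul, Pi.mul_apply] at h
  linarith

lemma norm_le_one_of_eq_zero_or_one {z : ℝ} (hz : z = 0 ∨ z = 1) : ‖z‖ ≤ 1 := by
  rcases hz with rfl | rfl <;> simp

structure IsRandomizedExperiment {Ω ι : Type*} [MeasurableSpace Ω] [Fintype ι] (ν : Measure Ω)
    (p : ℝ) (Z : Ω → ℝ) (Y1 Y0 Y : Ω → ι → ℝ) : Prop where
  measurable_treatment : Measurable Z
  treatment_eq_zero_or_one : ∀ ω, Z ω = 0 ∨ Z ω = 1
  measureReal_treatment : ν.real {ω | Z ω = 1} = p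
  indepFun : IndepFun Z (fun ω => (Y1 ω, Y0 ω)) ν
  memLp_one : MemLp Y1 2 ν
  memLp_zero : MemLp Y0 2 ν
  observed_eq : ∀ ω i, Y ω i = Z ω * Y1 ω i + (1 - Z ω) * Y0 ω i

namespace IsRandomizedExperiment
variable {Ω ι : Type*} [MeasurableSpace Ω] [Fintype ι] {ν : Measure Ω}
  {p : ℝ} {Z : Ω → ℝ} {Y Y1 Y0 : Ω → ι → ℝ}

lemma integral_treatment (h : IsRandomizedExperiment ν p Z Y1 Y0 Y) : ∫ ω, Z ω ∂ν = p := by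
  have hind : Z = Set.indicator {ω | Z ω = 1} 1 := by
    funext ω
    rcases h.treatment_eq_zero_or_one ω with hz | hz <;> simp [hz]
  conv_lhs => rw [hind]
  exact (integral_indicator_one (h.measurable_treatment (measurableSet_singleton 1))).trans
    h.measureReal_treatment

lemma integral_mul_add_one_sub_mul (h : IsRandomizedExperiment ν p Z Y1 Y0 Y)
    {f g : (ι → ℝ) × (ι → ℝ) → ℝ} (hf : Measurable f) (hg : Measurable g)
    (hfi : Integrable (fun ω => f (Y1 ω, Y0 ω)) ν) (hgi : Integrable (fun ω => g (Y1 ω, Y0 ω)) ν) :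
    ∫ ω, (Z ω * f (Y1 ω, Y0 ω) + (1 - Z ω) * g (Y1 ω, Y0 ω)) ∂ν
      = p * ∫ ω, f (Y1 ω, Y0 ω) ∂ν + (1 - p) * ∫ ω, g (Y1 ω, Y0 ω) ∂ν := by
  have hfg : Integrable (fun ω => f (Y1 ω, Y0 ω) - g (Y1 ω, Y0 ω)) ν := hfi.sub hgi
  have hindep : ∫ ω, Z ω * (f (Y1 ω, Y0 ω) - g (Y1 ω, Y0 ω)) ∂ν
      = (∫ ω, Z ω ∂ν) * ∫ ω, (f (Y1 ω, Y0 ω) - g (Y1 ω, Y0 ω)) ∂ν :=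
    (h.indepFun.comp measurable_id (hf.sub hg)).integral_mul_eq_mul_integral
      h.measurable_treatment.aestronglyMeasurable hfg.aestronglyMeasurable
  have hmix : ∀ ω, Z ω * f (Y1 ω, Y0 ω) + (1 - Z ω) * g (Y1 ω, Y0 ω)
      = Z ω * (f (Y1 ω, Y0 ω) - g (Y1 ω, Y0 ω)) + g (Y1 ω, Y0 ω) := fun ω => by ring
  simp_rw [hmix]
  rw [integral_add (hfg.bdd_mul h.measurable_treatment.aestronglyMeasurable (c := 1)
    (ae_of_all _ fun ω => norm_le_one_of_eq_zero_or_one (h.treatment_eq_zero_or_one ω))) hgi,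
    hindep, integral_sub hfi hgi, h.integral_treatment]
  ring

variable [IsProbabilityMeasure ν]

lemma memLp_treatment (h : IsRandomizedExperiment ν p Z Y1 Y0 Y) (q : ENNReal) : MemLp Z q ν :=
  (memLp_top_of_bound h.measurable_treatment.aestronglyMeasurable 1 (ae_of_all _ fun ω =>
    norm_le_one_of_eq_zero_or_one (h.treatment_eq_zero_or_one ω))).mono_exponent le_top

lemma integral_sub_sq_treatment (h : IsRandomizedExperiment ν p Z Y1 Y0 Y) :
    ∫ ω, (Z ω - p) ^ 2 ∂ν = p * (1 - p) := by
  have hsq : ∀ ω, (Z ω - p) ^ 2 = (1 - 2 * p) * Z ω + p ^ 2 := fun ω => by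
    rcases h.treatment_eq_zero_or_one ω with hz | hz <;> rw [hz] <;> ring
  simp_rw [hsq]
  rw [integral_add (((h.memLp_treatment 1).integrable le_rfl).const_mul _) (integrable_const _),
    integral_const_mul, integral_const, h.integral_treatment]
  simp only [probReal_univ, one_smul]
  ring

lemma memLp_observed_apply (h : IsRandomizedExperiment ν p Z Y1 Y0 Y) (i : ι) :
    MemLp (fun ω => Y ω i) 2 ν := by
  have hZ := h.memLp_treatment ⊤
  simp_rw [h.observed_eq]
  exact ((h.memLp_one.eval i).mul' hZ).add ((h.memLp_zero.eval i).mul' ((memLp_const 1).sub hZ))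

lemma integral_observed_apply (h : IsRandomizedExperiment ν p Z Y1 Y0 Y) (i : ι) :
    ∫ ω, Y ω i ∂ν = p * ∫ ω, Y1 ω i ∂ν + (1 - p) * ∫ ω, Y0 ω i ∂ν := by
  simp_rw [h.observed_eq]
  exact h.integral_mul_add_one_sub_mul (f := fun w => w.1 i) (g := fun w => w.2 i)
    (by fun_prop) (by fun_prop) ((h.memLp_one.eval i).integrable one_le_two)
    ((h.memLp_zero.eval i).integrable one_le_two)

lemma covariance_observed_apply (h : IsRandomizedExperiment ν p Z Y1 Y0 Y) (i j : ι) :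
    cov[fun ω => Y ω i, fun ω => Y ω j; ν]
      = p * (1 - p) * ((∫ ω, (Y1 ω i - Y0 ω i) ∂ν) * ∫ ω, (Y1 ω j - Y0 ω j) ∂ν)
        + p * cov[fun ω => Y1 ω i, fun ω => Y1 ω j; ν]
        + (1 - p) * cov[fun ω => Y0 ω i, fun ω => Y0 ω j; ν] := by
  have ha := h.integral_observed_apply i
  have hb := h.integral_observed_apply j
  set a := ∫ ω, Y ω i ∂ν
  set b := ∫ ω, Y ω j ∂ν
  have hsplit : ∀ ω, (Y ω i - a) * (Y ω j - b)
      = Z ω * ((Y1 ω i - a) * (Y1 ω j - b)) + (1 - Z ω) * ((Y0 ω i - a) * (Y0 ω j - b)) :=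
    fun ω => by
      rcases h.treatment_eq_zero_or_one ω with hz | hz <;> simp only [h.observed_eq, hz] <;> ring
  have hprod : ∀ X : Ω → ι → ℝ, MemLp X 2 ν →
      Integrable (fun ω => (X ω i - a) * (X ω j - b)) ν := fun X hX =>
    ((hX.eval i).sub (memLp_const a)).integrable_mul ((hX.eval j).sub (memLp_const b))
  have hY1 := h.memLp_one
  have hY0 := h.memLp_zero
  change ∫ ω, (Y ω i - a) * (Y ω j - b) ∂ν = _
  simp_rw [hsplit]
  rw [h.integral_mul_add_one_sub_mul
      (f := fun w => (w.1 i - a) * (w.1 j - b)) (g := fun w => (w.2 i - a) * (w.2 j - b))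
      (by fun_prop) (by fun_prop) (hprod Y1 hY1) (hprod Y0 hY0),
    integral_sub_mul_sub_eq_covariance_add (hY1.eval i) (hY1.eval j),
    integral_sub_mul_sub_eq_covariance_add (hY0.eval i) (hY0.eval j),
    integral_sub ((hY1.eval i).integrable one_le_two) ((hY0.eval i).integrable one_le_two),
    integral_sub ((hY1.eval j).integrable one_le_two) ((hY0.eval j).integrable one_le_two),
    ha, hb]
  ring

lemma integral_centered_observed_mul_treatment (h : IsRandomizedExperiment ν p Z Y1 Y0 Y)
    (i : ι) :
    ∫ ω, (Y ω i - ∫ x, Y x i ∂ν) * Z ω ∂ν = p * (1 - p) * ∫ ω, (Y1 ω i - Y0 ω i) ∂ν := by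
  have ha := h.integral_observed_apply i
  set a := ∫ ω, Y ω i ∂ν
  have hsplit : ∀ ω, (Y ω i - a) * Z ω = Z ω * (Y1 ω i - a) + (1 - Z ω) * 0 :=
    fun ω => by
      rcases h.treatment_eq_zero_or_one ω with hz | hz <;> simp only [h.observed_eq, hz] <;> ring
  have hY1i := (h.memLp_one.eval i).integrable one_le_two
  simp_rw [hsplit]
  rw [h.integral_mul_add_one_sub_mul (f := fun w => w.1 i - a) (g := fun _ => 0)
      (by fun_prop) (by fun_prop) (hY1i.sub (integrable_const a)) (integrable_const 0),
    integral_sub hY1i (integrable_const a),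
    integral_sub hY1i ((h.memLp_zero.eval i).integrable one_le_two), ha]
  simp only [integral_const, probReal_univ, one_smul]
  ring

end IsRandomizedExperiment

lemma Matrix.inv_mulVec_eq_zero_iff {n K : Type*} [Fintype n] [DecidableEq n] [Field K]
    {A : Matrix n n K} (hA : IsUnit A.det) {v : n → K} : A⁻¹ *ᵥ v = 0 ↔ v = 0 :=
  (mulVec_injective_of_det_ne_zero (isUnit_nonsing_inv_det A hA).ne_zero).eq_iff'
    (mulVec_zero _)

theorem inverse_regression_stratified_population_equivalence_general
    {Ω : Type*} [MeasurableSpace Ω] (μ : Measure Ω) [IsProbabilityMeasure μ]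
    (L S : ℕ) (Z : Ω → ℝ) (C : Ω → Fin S) (Y1 Y0 : Ω → Fin L → ℝ)
    (hZmeas : Measurable Z) (hCmeas : Measurable C)
    (hZ01 : ∀ ω, Z ω = 0 ∨ Z ω = 1)
    (hY1L2 : MemLp Y1 2 μ) (hY0L2 : MemLp Y0 2 μ)
    -- conditional (within-stratum) measures
    (condμ : Fin S → Measure Ω)
    (hcondμ : condμ = fun s => ProbabilityTheory.cond μ {ω | C ω = s})
    -- stratified randomization: Z ⫫ (Y(1), Y(0)) given C
    (hindep : ∀ s, IndepFun Z (fun ω => (Y1 ω, Y0 ω)) (condμ s))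
    -- stratum probabilities and propensities
    (π : Fin S → ℝ) (hπ : π = fun s => (μ {ω | C ω = s}).toReal)
    (hπpos : ∀ s, 0 < π s)
    (p : Fin S → ℝ) (hp : p = fun s => (condμ s {ω | Z ω = 1}).toReal)
    (hp01 : ∀ s, 0 < p s ∧ p s < 1)
    -- observed outcome
    (Y : Ω → Fin L → ℝ) (hY : Y = fun ω j => Z ω * Y1 ω j + (1 - Z ω) * Y0 ω j)
    -- within-stratum moments
    (mZ : Fin S → ℝ) (hmZ : mZ = fun s => ∫ ω, Z ω ∂(condμ s))
    (mY : Fin S → Fin L → ℝ) (hmY : mY = fun s j => ∫ ω, Y ω j ∂(condμ s))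
    (varZc : Fin S → ℝ) (hvarZc : varZc = fun s => ∫ ω, (Z ω - mZ s) ^ 2 ∂(condμ s))
    (covYc : Fin S → Matrix (Fin L) (Fin L) ℝ)
    (hcovYc : covYc = fun s => Matrix.of fun i j =>
      ∫ ω, (Y ω i - mY s i) * (Y ω j - mY s j) ∂(condμ s))
    -- stratum-specific treatment effects and the variance-weighted effect
    (τs : Fin S → Fin L → ℝ)
    (hτs : τs = fun s j => ∫ ω, (Y1 ω j - Y0 ω j) ∂(condμ s))
    (τSR : Fin L → ℝ)
    (hτSR : τSR = (∑ s, π s * p s * (1 - p s))⁻¹ •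
      ∑ s, (π s * p s * (1 - p s)) • τs s)
    -- population inverse regression coefficient (Frisch–Waugh–Lovell form)
    (EYtilYtil : Matrix (Fin L) (Fin L) ℝ)
    (hEYtilYtil : EYtilYtil = Matrix.of fun i j =>
      ∫ ω, (Y ω i - mY (C ω) i) * (Y ω j - mY (C ω) j) ∂μ)
    (EYtilZ : Fin L → ℝ)
    (hEYtilZ : EYtilZ = fun j => ∫ ω, (Y ω j - mY (C ω) j) * Z ω ∂μ)
    (βSR : Fin L → ℝ) (hβSR : βSR = EYtilYtil⁻¹ *ᵥ EYtilZ)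
    -- expected conditional moments
    (EvarZC : ℝ) (hEvarZC : EvarZC = ∑ s, π s * varZc s)
    (EcovYC : Matrix (Fin L) (Fin L) ℝ) (hEcovYC : EcovYC = ∑ s, π s • covYc s)
    (hEcovYCInv : IsUnit EcovYC.det)
    -- within-stratum covariances of the potential outcomes
    (mY1 mY0 : Fin S → Fin L → ℝ)
    (hmY1 : mY1 = fun s j => ∫ ω, Y1 ω j ∂(condμ s))
    (hmY0 : mY0 = fun s j => ∫ ω, Y0 ω j ∂(condμ s))
    (cov1c cov0c : Fin S → Matrix (Fin L) (Fin L) ℝ)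
    (hcov1c : cov1c = fun s => Matrix.of fun i j =>
      ∫ ω, (Y1 ω i - mY1 s i) * (Y1 ω j - mY1 s j) ∂(condμ s))
    (hcov0c : cov0c = fun s => Matrix.of fun i j =>
      ∫ ω, (Y0 ω i - mY0 s i) * (Y0 ω j - mY0 s j) ∂(condμ s)) :
    βSR = EvarZC • (EcovYC⁻¹ *ᵥ τSR) ∧
    EvarZC = ∑ s, π s * (p s * (1 - p s)) ∧
    EcovYC = ∑ s, π s •
      ((p s * (1 - p s)) • vecMulVec (τs s) (τs s)
        + p s • cov1c s + (1 - p s) • cov0c s) ∧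
    (βSR = 0 ↔ τSR = 0) := by
  subst hcondμ
  beta_reduce at *
  have hA : ∀ s, μ {ω | C ω = s} ≠ 0 := fun s h => (hπpos s).ne' (by simp [hπ, h])
  have hprob := fun s => cond_isProbabilityMeasure (μ := μ) (hA s)
  have hexp : ∀ s, IsRandomizedExperiment μ[|{ω | C ω = s}] (p s) Z Y1 Y0 Y := fun s =>
    ⟨hZmeas, hZ01, by rw [hp]; rfl, hindep s, hY1L2.cond (hA s), hY0L2.cond (hA s),
      fun ω j => by rw [hY]⟩
  have hcov : ∀ s, covYc s = (p s * (1 - p s)) • vecMulVec (τs s) (τs s)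
      + p s • cov1c s + (1 - p s) • cov0c s := fun s => by
    ext i j
    simp only [hcovYc, hmY, hτs, hcov1c, hcov0c, hmY1, hmY0, of_apply, Matrix.add_apply,
      Matrix.smul_apply, vecMulVec_apply, smul_eq_mul]
    exact (hexp s).covariance_observed_apply i j
  have hYc : ∀ s i, MemLp (fun ω => Y ω i - mY s i) 2 μ[|{ω | C ω = s}] := fun s i =>
    ((hexp s).memLp_observed_apply i).sub (memLp_const _)
  have hEE : EYtilYtil = EcovYC := by
    rw [hEYtilYtil, hEcovYC]
    ext i j
    rw [of_apply, integral_eq_sum_measureReal_smul_integral_cond hCmeas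
      (F := fun s ω => (Y ω i - mY s i) * (Y ω j - mY s j))
      fun s => (hYc s i).integrable_mul (hYc s j)]
    simp only [Matrix.sum_apply, Matrix.smul_apply, hπ, hcovYc, of_apply, smul_eq_mul,
      measureReal_def]
  have hEZ : EYtilZ = ∑ s, (π s * p s * (1 - p s)) • τs s := by
    rw [hEYtilZ]
    ext j
    rw [integral_eq_sum_measureReal_smul_integral_cond hCmeas
      (F := fun s ω => (Y ω j - mY s j) * Z ω)
      fun s => (hYc s j).integrable_mul ((hexp s).memLp_treatment 2)]
    simp only [Finset.sum_apply, Pi.smul_apply, smul_eq_mul, hmY, hτs, hπ,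
      (hexp _).integral_centered_observed_mul_treatment, mul_assoc, measureReal_def]
  have hEvar : EvarZC = ∑ s, π s * (p s * (1 - p s)) := by
    simp only [hEvarZC, hvarZc, hmZ, (hexp _).integral_treatment,
      (hexp _).integral_sub_sq_treatment]
  have hW : EvarZC = ∑ s, π s * p s * (1 - p s) := by simp only [hEvar, mul_assoc]
  have : Nonempty (Fin S) := (nonempty_of_isProbabilityMeasure μ).map C
  have hW_pos : 0 < EvarZC := hW ▸ Finset.sum_pos (fun s _ =>
    mul_pos (mul_pos (hπpos s) (hp01 s).1) (sub_pos.mpr (hp01 s).2)) univ_nonempty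
  have hβ : βSR = EvarZC • (EcovYC⁻¹ *ᵥ τSR) := by
    rw [hβSR, hEE, hEZ, hτSR, mulVec_smul, smul_smul, ← hW, mul_inv_cancel₀ hW_pos.ne',
      one_smul]
  refine ⟨hβ, hEvar, by simp only [hEcovYC, hcov], ?_⟩
  rw [hβ, smul_eq_zero_iff_right hW_pos.ne', inv_mulVec_eq_zero_iff hEcovYCInv]

/-- Population-level part of Proposition 2: under stratified randomization,
`β_SR = E{var(Z|C)} E{cov(Y|C)}⁻¹ τ_SR`, with the stated expressions for
`E{var(Z|C)}` and `E{cov(Y|C)}`; in particular `β_SR = 0 ↔ τ_SR = 0`. -/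
theorem inverse_regression_stratified_population_equivalence
    {Ω : Type*} [MeasurableSpace Ω] (μ : Measure Ω) [IsProbabilityMeasure μ]
    (L S : ℕ) (Z : Ω → ℝ) (C : Ω → Fin S) (Y1 Y0 : Ω → Fin L → ℝ)
    (hZmeas : Measurable Z) (hCmeas : Measurable C)
    (hY1meas : Measurable Y1) (hY0meas : Measurable Y0)
    (hZ01 : ∀ ω, Z ω = 0 ∨ Z ω = 1)
    (hY1L2 : MemLp Y1 2 μ) (hY0L2 : MemLp Y0 2 μ)
    -- conditional (within-stratum) measures
    (condμ : Fin S → Measure Ω)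
    (hcondμ : condμ = fun s => ProbabilityTheory.cond μ {ω | C ω = s})
    -- stratified randomization: Z ⫫ (Y(1), Y(0)) given C
    (hindep : ∀ s, IndepFun Z (fun ω => (Y1 ω, Y0 ω)) (condμ s))
    -- stratum probabilities and propensities
    (π : Fin S → ℝ) (hπ : π = fun s => (μ {ω | C ω = s}).toReal)
    (hπpos : ∀ s, 0 < π s)
    (p : Fin S → ℝ) (hp : p = fun s => (condμ s {ω | Z ω = 1}).toReal)
    (hp01 : ∀ s, 0 < p s ∧ p s < 1)
    -- observed outcome
    (Y : Ω → Fin L → ℝ) (hY : Y = fun ω j => Z ω * Y1 ω j + (1 - Z ω) * Y0 ω j)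
    -- within-stratum moments
    (mZ : Fin S → ℝ) (hmZ : mZ = fun s => ∫ ω, Z ω ∂(condμ s))
    (mY : Fin S → Fin L → ℝ) (hmY : mY = fun s j => ∫ ω, Y ω j ∂(condμ s))
    (varZc : Fin S → ℝ) (hvarZc : varZc = fun s => ∫ ω, (Z ω - mZ s) ^ 2 ∂(condμ s))
    (covYc : Fin S → Matrix (Fin L) (Fin L) ℝ)
    (hcovYc : covYc = fun s => Matrix.of fun i j =>
      ∫ ω, (Y ω i - mY s i) * (Y ω j - mY s j) ∂(condμ s))
    -- stratum-specific treatment effects and the variance-weighted effect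
    (τs : Fin S → Fin L → ℝ)
    (hτs : τs = fun s j => ∫ ω, (Y1 ω j - Y0 ω j) ∂(condμ s))
    (τSR : Fin L → ℝ)
    (hτSR : τSR = (∑ s, π s * p s * (1 - p s))⁻¹ •
      ∑ s, (π s * p s * (1 - p s)) • τs s)
    -- population inverse regression coefficient (Frisch–Waugh–Lovell form)
    (EYtilYtil : Matrix (Fin L) (Fin L) ℝ)
    (hEYtilYtil : EYtilYtil = Matrix.of fun i j =>
      ∫ ω, (Y ω i - mY (C ω) i) * (Y ω j - mY (C ω) j) ∂μ)
    (EYtilZ : Fin L → ℝ)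
    (hEYtilZ : EYtilZ = fun j => ∫ ω, (Y ω j - mY (C ω) j) * Z ω ∂μ)
    (βSR : Fin L → ℝ) (hβSR : βSR = EYtilYtil⁻¹ *ᵥ EYtilZ)
    -- expected conditional moments
    (EvarZC : ℝ) (hEvarZC : EvarZC = ∑ s, π s * varZc s)
    (EcovYC : Matrix (Fin L) (Fin L) ℝ) (hEcovYC : EcovYC = ∑ s, π s • covYc s)
    (hEcovYCInv : IsUnit EcovYC.det)
    -- within-stratum covariances of the potential outcomes
    (mY1 mY0 : Fin S → Fin L → ℝ)
    (hmY1 : mY1 = fun s j => ∫ ω, Y1 ω j ∂(condμ s))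
    (hmY0 : mY0 = fun s j => ∫ ω, Y0 ω j ∂(condμ s))
    (cov1c cov0c : Fin S → Matrix (Fin L) (Fin L) ℝ)
    (hcov1c : cov1c = fun s => Matrix.of fun i j =>
      ∫ ω, (Y1 ω i - mY1 s i) * (Y1 ω j - mY1 s j) ∂(condμ s))
    (hcov0c : cov0c = fun s => Matrix.of fun i j =>
      ∫ ω, (Y0 ω i - mY0 s i) * (Y0 ω j - mY0 s j) ∂(condμ s)) :
    βSR = EvarZC • (EcovYC⁻¹ *ᵥ τSR) ∧
    EvarZC = ∑ s, π s * (p s * (1 - p s)) ∧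
    EcovYC = ∑ s, π s •
      ((p s * (1 - p s)) • vecMulVec (τs s) (τs s)
        + p s • cov1c s + (1 - p s) • cov0c s) ∧
    (βSR = 0 ↔ τSR = 0) :=
  inverse_regression_stratified_population_equivalence_general μ L S Z C Y1 Y0 hZmeas hCmeas hZ01
    hY1L2 hY0L2 condμ hcondμ hindep π hπ hπpos p hp hp01 Y hY mZ hmZ mY hmY varZc hvarZc covYc
    hcovYc τs hτs τSR hτSR EYtilYtil hEYtilYtil EYtilZ hEYtilZ βSR hβSR EvarZC hEvarZC EcovYC
    hEcovYC hEcovYCInv mY1 mY0 hmY1 hmY0 cov1c cov0c hcov1c hcov0c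
end

section
/- Sample-level part of Proposition 3: For data (z_i, y_i) and strictly positive weights w_i, i = 1,...,n, with φ^w_zz ≠ 0 and φ^w_yy invertible, the weighted inverse regression coefficient satisfies β̂_OS = φ^w_zz (φ^w_yy)^{-1} τ̂_OS, and moreover φ^w_yy = φ^w_zz [ Σ̂_OS + τ̂_OS τ̂_OSᵀ ] so that, when Σ̂_OS is invertible, β̂_OS = Σ̂_OS^{-1} τ̂_OS / (1 + τ̂_OSᵀ Σ̂_OS^{-1} τ̂_OS). Here Σ̂_OS = (φ^w_zz)^{-1}[ c̃ov{Y(1)} + c̃ov{Y(0)} ], c̃ov{Y(1)} = n^{-1} Σ_i w_i z_i (y_i − ȳ_w(1))(y_i − ȳ_w(1))ᵀ, c̃ov{Y(0)} = n^{-1} Σ_i w_i (1−z_i)(y_i − ȳ_w(0))(y_i − ȳ_w(0))ᵀ, ȳ_w(1) = Σ_i w_i z_i y_i / Σ_i w_i z_i, and ȳ_w(0) = Σ_i w_i (1−z_i) y_i / Σ_i w_i (1−z_i). -/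
/-!
Since `z` is binary, `Σ wᵢ zᵢ² = Σ wᵢ zᵢ` and `φ_zz = B C / (n A)` with `A = Σ wᵢ`, `B = Σ wᵢ zᵢ`,
`C = Σ wᵢ (1 - zᵢ)`. The weighted scatter of `y` about its overall mean splits into the two
within-group scatters (`n (c̃ov{Y(1)} + c̃ov{Y(0)})`) plus a rank-one between-group term
`(A / (B C)) d dᵀ` with `d = n φ_yz`, which is `n φ_yz φ_yzᵀ / φ_zz`. Hence
`φ_yy = φ_zz (Σ̂ + τ̂ τ̂ᵀ)`, so `β̂` solves `(Σ̂ + τ̂ τ̂ᵀ) β̂ = τ̂`, and the Sherman–Morrison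
argument solves this rank-one perturbed system.
-/

open Matrix Finset

theorem sum_smul_eq_add_sum_smul_one_sub {ι K M : Type*} [Fintype ι] [Ring K] [AddCommGroup M]
    [Module K M] (w z : ι → K) (f : ι → M) :
    ∑ i, w i • f i = ∑ i, (w i * z i) • f i + ∑ i, (w i * (1 - z i)) • f i := by
  rw [← sum_add_distrib]
  exact sum_congr rfl fun i _ => by rw [← add_smul, ← mul_add, add_sub_cancel, mul_one]

theorem inv_smul_vecMulVec_add_inv_smul_vecMulVec {κ K : Type*} [Field K] {B C : K}
    (hB : B ≠ 0) (hC : C ≠ 0) (hBC : B + C ≠ 0) (u v : κ → K) :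
    B⁻¹ • vecMulVec u u + C⁻¹ • vecMulVec v v =
      (B + C)⁻¹ • vecMulVec (u + v) (u + v) +
        (B * C / (B + C))⁻¹ •
          vecMulVec (u - (B / (B + C)) • (u + v)) (u - (B / (B + C)) • (u + v)) := by
  ext j k
  simp only [Matrix.add_apply, Matrix.smul_apply, vecMulVec_apply, Pi.add_apply, Pi.sub_apply,
    Pi.smul_apply, smul_eq_mul]
  field_simp
  ring

section WeightedScatter

variable {ι κ K : Type*} [Fintype ι] [Field K]

noncomputable def weightedMean (a : ι → K) (y : ι → κ → K) : κ → K :=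
  (∑ i, a i)⁻¹ • ∑ i, a i • y i

noncomputable def weightedScatter (a : ι → K) (y : ι → κ → K) : Matrix κ κ K :=
  ∑ i, a i • vecMulVec (y i - weightedMean a y) (y i - weightedMean a y)

theorem fun_mul_sum_mul_eq_smul_sum (c : K) (a : ι → K) (y : ι → κ → K) :
    (fun j => c * ∑ i, a i * y i j) = c • ∑ i, a i • y i := by
  ext j
  simp [Finset.sum_apply]

theorem weightedMean_eq_fun_sum_div (a : ι → K) (y : ι → κ → K) :
    weightedMean a y = fun j => (∑ i, a i * y i j) / ∑ i, a i := by
  ext j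
  simp [weightedMean, Finset.sum_apply, div_eq_inv_mul]

-- If `∑ i, a i = 0` then `weightedMean a y = 0` (as `0⁻¹ = 0`), and both sides are the raw
-- second moment.
theorem weightedScatter_eq_sum_sub (a : ι → K) (y : ι → κ → K) :
    weightedScatter a y = ∑ i, a i • vecMulVec (y i) (y i) -
      (∑ i, a i)⁻¹ • vecMulVec (∑ i, a i • y i) (∑ i, a i • y i) := by
  ext j k
  simp only [weightedScatter, Matrix.sum_apply, Matrix.smul_apply, Matrix.sub_apply,
    vecMulVec_apply, Pi.sub_apply, smul_eq_mul]
  set m := weightedMean a y with hm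
  have expand : ∀ i, a i * ((y i j - m j) * (y i k - m k)) =
      a i * (y i j * y i k) - m k * (a i * y i j) - m j * (a i * y i k) + m j * m k * a i :=
    fun i => by ring
  simp only [expand, sum_add_distrib, sum_sub_distrib, ← mul_sum]
  simp only [hm, weightedMean, Pi.smul_apply, Finset.sum_apply, smul_eq_mul]
  rcases eq_or_ne (∑ i, a i) 0 with hA | hA
  · simp [hA]
  · field_simp
    ring


theorem weightedScatter_eq_within_add_between (w z : ι → K) (y : ι → κ → K) (hA : ∑ i, w i ≠ 0)
    (hB : ∑ i, w i * z i ≠ 0) (hC : ∑ i, w i * (1 - z i) ≠ 0) :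
    weightedScatter w y = weightedScatter (fun i => w i * z i) y +
      weightedScatter (fun i => w i * (1 - z i)) y +
        ((∑ i, w i * z i) * (∑ i, w i * (1 - z i)) / ∑ i, w i)⁻¹ •
          vecMulVec (∑ i, (w i * z i) • y i - ((∑ i, w i * z i) / ∑ i, w i) • ∑ i, w i • y i)
            (∑ i, (w i * z i) • y i - ((∑ i, w i * z i) / ∑ i, w i) • ∑ i, w i • y i) := by
  have hAsplit : ∑ i, w i = ∑ i, w i * z i + ∑ i, w i * (1 - z i) := by
    simpa using sum_smul_eq_add_sum_smul_one_sub w z (fun _ => (1 : K))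
  rw [hAsplit] at hA
  simp only [weightedScatter_eq_sum_sub]
  rw [sum_smul_eq_add_sum_smul_one_sub w z (fun i => vecMulVec (y i) (y i)),
    sum_smul_eq_add_sum_smul_one_sub w z y, hAsplit]
  linear_combination (norm := module) inv_smul_vecMulVec_add_inv_smul_vecMulVec hB hC hA
    (∑ i, (w i * z i) • y i) (∑ i, (w i * (1 - z i)) • y i)

theorem centered_sq_moment_of_binary {c : K} (hc : c ≠ 0)
    (w z : ι → K) (hz : ∀ i, z i = 0 ∨ z i = 1) (hA : ∑ i, w i ≠ 0) :
    c * ∑ i, w i * z i * z i - c * (∑ i, w i * z i) * (c * ∑ i, w i)⁻¹ * (c * ∑ i, w i * z i) =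
      c * ((∑ i, w i * z i) * (∑ i, w i * (1 - z i)) / ∑ i, w i) := by
  have hzz : ∑ i, w i * z i * z i = ∑ i, w i * z i :=
    sum_congr rfl fun i _ => by rcases hz i with h | h <;> simp [h]
  rw [hzz]
  simp only [mul_one_sub, sum_sub_distrib]
  field_simp

end WeightedScatter

-- `1 + vᵀ S⁻¹ u` cannot vanish, since `t = v ⬝ᵥ x` satisfies `t (1 + vᵀ S⁻¹ u) = vᵀ S⁻¹ u`.
theorem eq_inv_smul_of_add_vecMulVec_mulVec_eq {n K : Type*} [Fintype n] [DecidableEq n]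
    [Field K] {S : Matrix n n K} (hS : IsUnit S.det) {u v x : n → K}
    (hx : (S + vecMulVec u v) *ᵥ x = u) :
    x = (1 + v ⬝ᵥ (S⁻¹ *ᵥ u))⁻¹ • (S⁻¹ *ᵥ u) := by
  set r := S⁻¹ *ᵥ u
  have hSx : S *ᵥ x = (1 - v ⬝ᵥ x) • u := by
    rw [add_mulVec, vecMulVec_mulVec, op_smul_eq_smul] at hx
    rw [sub_smul, one_smul, eq_sub_iff_add_eq, hx]
  have hxr : x = (1 - v ⬝ᵥ x) • r := by
    rw [← mulVec_smul, ← hSx, mulVec_mulVec, nonsing_inv_mul _ hS, one_mulVec]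
  have hc : (v ⬝ᵥ x) * (1 + v ⬝ᵥ r) = v ⬝ᵥ r := by
    have := congrArg (v ⬝ᵥ ·) hxr
    simp only [dotProduct_smul, smul_eq_mul] at this
    linear_combination this
  have h1c : 1 + v ⬝ᵥ r ≠ 0 := fun h => by
    rw [h, mul_zero] at hc
    exact one_ne_zero (by linear_combination h + hc : (1 : K) = 0)
  rw [hxr]
  congr 1
  field_simp
  linear_combination -hc

/-- Sample-level part of Proposition 3: equivalence between the weighted inverse
regression coefficient `β̂_OS` and the weighted difference estimator `τ̂_OS`. -/
theorem inverse_regression_weighted_sample_equivalence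
    (n L : ℕ) (hn : 0 < n)
    (z w : Fin n → ℝ) (y : Fin n → Fin L → ℝ)
    (hz01 : ∀ i, z i = 0 ∨ z i = 1)
    (hw : ∀ i, 0 < w i)
    -- weighted sample moments
    (Sw11 : ℝ) (hSw11 : Sw11 = (n : ℝ)⁻¹ * ∑ i, w i)
    (Swz1 : ℝ) (hSwz1 : Swz1 = (n : ℝ)⁻¹ * ∑ i, w i * z i)
    (Swzz : ℝ) (hSwzz : Swzz = (n : ℝ)⁻¹ * ∑ i, w i * z i * z i)
    (Swy1 : Fin L → ℝ) (hSwy1 : Swy1 = fun j => (n : ℝ)⁻¹ * ∑ i, w i * y i j)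
    (Swyz : Fin L → ℝ) (hSwyz : Swyz = fun j => (n : ℝ)⁻¹ * ∑ i, w i * y i j * z i)
    (Swyy : Matrix (Fin L) (Fin L) ℝ)
    (hSwyy : Swyy = (n : ℝ)⁻¹ • ∑ i, w i • vecMulVec (y i) (y i))
    -- centered weighted moments
    (φyy : Matrix (Fin L) (Fin L) ℝ)
    (hφyy : φyy = Swyy - Sw11⁻¹ • vecMulVec Swy1 Swy1)
    (φzz : ℝ) (hφzz : φzz = Swzz - Swz1 * Sw11⁻¹ * Swz1)
    (φyz : Fin L → ℝ) (hφyz : φyz = Swyz - (Sw11⁻¹ * Swz1) • Swy1)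
    -- estimators
    (βhatOS : Fin L → ℝ) (hβhatOS : βhatOS = φyy⁻¹ *ᵥ φyz)
    (τhatOS : Fin L → ℝ) (hτhatOS : τhatOS = φzz⁻¹ • φyz)
    -- weighted group means and covariances
    (ybarw1 ybarw0 : Fin L → ℝ)
    (hybarw1 : ybarw1 = fun j => (∑ i, w i * z i * y i j) / (∑ i, w i * z i))
    (hybarw0 : ybarw0 = fun j => (∑ i, w i * (1 - z i) * y i j) / (∑ i, w i * (1 - z i)))
    (cov1 cov0 : Matrix (Fin L) (Fin L) ℝ)
    (hcov1 : cov1 = (n : ℝ)⁻¹ •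
      ∑ i, (w i * z i) • vecMulVec (y i - ybarw1) (y i - ybarw1))
    (hcov0 : cov0 = (n : ℝ)⁻¹ •
      ∑ i, (w i * (1 - z i)) • vecMulVec (y i - ybarw0) (y i - ybarw0))
    (SigmahatOS : Matrix (Fin L) (Fin L) ℝ)
    (hSigmahatOS : SigmahatOS = φzz⁻¹ • (cov1 + cov0))
    (hφzz0 : φzz ≠ 0)
    (hφyyInv : IsUnit φyy.det) :
    βhatOS = φzz • (φyy⁻¹ *ᵥ τhatOS) ∧
    φyy = φzz • (SigmahatOS + vecMulVec τhatOS τhatOS) ∧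
    (IsUnit SigmahatOS.det →
      βhatOS = (1 + τhatOS ⬝ᵥ (SigmahatOS⁻¹ *ᵥ τhatOS))⁻¹ • (SigmahatOS⁻¹ *ᵥ τhatOS)) := by
  have hnR : (n : ℝ) ≠ 0 := Nat.cast_ne_zero.mpr hn.ne'
  have hA : ∑ i, w i ≠ 0 := (sum_pos (fun i _ => hw i) (univ_nonempty_iff.mpr ⟨⟨0, hn⟩⟩)).ne'
  have hφzz' : φzz = (n : ℝ)⁻¹ * ((∑ i, w i * z i) * (∑ i, w i * (1 - z i)) / ∑ i, w i) := by
    rw [hφzz, hSwzz, hSwz1, hSw11, centered_sq_moment_of_binary (inv_ne_zero hnR) w z hz01 hA]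
  have hB0 : ∑ i, w i * z i ≠ 0 := fun h => hφzz0 (by rw [hφzz', h]; ring)
  have hC0 : ∑ i, w i * (1 - z i) ≠ 0 := fun h => hφzz0 (by rw [hφzz', h]; ring)
  rw [fun_mul_sum_mul_eq_smul_sum] at hSwy1
  simp_rw [mul_right_comm (w _) (y _ _) (z _)] at hSwyz
  rw [fun_mul_sum_mul_eq_smul_sum] at hSwyz
  have hφyz' : φyz = (n : ℝ)⁻¹ •
      (∑ i, (w i * z i) • y i - ((∑ i, w i * z i) / ∑ i, w i) • ∑ i, w i • y i) := by
    rw [hφyz, hSwyz, hSwy1, hSw11, hSwz1]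
    match_scalars <;> field_simp
  have hφyy' : φyy = (n : ℝ)⁻¹ • weightedScatter w y := by
    rw [hφyy, hSwyy, hSw11, hSwy1, weightedScatter_eq_sum_sub, smul_vecMulVec, vecMulVec_smul]
    match_scalars <;> field_simp
  have hcov : cov1 + cov0 = (n : ℝ)⁻¹ •
      (weightedScatter (fun i => w i * z i) y + weightedScatter (fun i => w i * (1 - z i)) y) := by
    rw [hcov1, hcov0, hybarw1, hybarw0, ← weightedMean_eq_fun_sum_div,
      ← weightedMean_eq_fun_sum_div, smul_add]
    rfl
  have hM : φyy = φzz • (SigmahatOS + vecMulVec τhatOS τhatOS) := by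
    rw [hSigmahatOS, hτhatOS, hcov, hφyy',
      weightedScatter_eq_within_add_between w z y hA hB0 hC0, hφyz']
    simp only [smul_vecMulVec, vecMulVec_smul, smul_add, smul_smul]
    rw [hφzz']
    match_scalars <;> field_simp
  refine ⟨?_, hM, fun hS => eq_inv_smul_of_add_vecMulVec_mulVec_eq hS ?_⟩
  · rw [hβhatOS, hτhatOS, mulVec_smul, smul_smul, mul_inv_cancel₀ hφzz0, one_smul]
  · calc (SigmahatOS + vecMulVec τhatOS τhatOS) *ᵥ βhatOS = φzz⁻¹ • (φyy *ᵥ βhatOS) := by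
          rw [hM, smul_mulVec, smul_smul, inv_mul_cancel₀ hφzz0, one_smul]
      _ = τhatOS := by
          rw [hβhatOS, mulVec_mulVec, mul_nonsing_inv _ hφyyInv, one_mulVec, hτhatOS]
end

section
/- Proposition S1 (equivalence with covariates in completely randomized experiments): (a) For data (z_i, x_i, y_i), i = 1,...,n, with yᵀ(I_n − H_x)y invertible and zᵀ(I_n − H_x)z ≠ 0, the covariate-adjusted inverse regression coefficient satisfies β̂_A = {n^{-1} zᵀ(I_n − H_x) z}{n^{-1} yᵀ(I_n − H_x) y}^{-1} τ̂_A. (b) Under complete randomization with Z independent of (Y(1), Y(0), X), treatment probability p = P(Z=1) ∈ (0,1), cov(X) invertible, and cov(Y) − cov(Y,X)cov(X)^{-1}cov(X,Y) invertible, the population coefficient satisfies β_A = var(Z) [cov(Y) − cov(Y,X) cov(X)^{-1} cov(X,Y)]^{-1} τ. -/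
/-!
(a) is pure rescaling: the factors `n⁻¹` and `zᵀ(I - H_x)z` introduced on the right cancel.

(b) Under complete randomization `X` is independent of `Z`, so `cov(X, Z) = 0` and the
covariate adjustment term of `β_A` vanishes. Writing `Y = Z (Y(1) - Y(0)) + Y(0)` with `Y(0)`
independent of `Z`, and using `Z² = Z`, gives `cov(Y, Z) = var(Z) E[Y(1) - Y(0)] = var(Z) τ`.
-/

open MeasureTheory ProbabilityTheory Matrix

theorem Matrix.inv_mulVec_eq_smul_inv_smul_mulVec {m K : Type*} [Fintype m] [DecidableEq m]
    [Field K] {A : Matrix m m K} (hA : IsUnit A.det) (v : m → K) {s c : K} (hs : s ≠ 0)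
    (hc : c ≠ 0) :
    A⁻¹ *ᵥ v = (s * c) • ((s • A)⁻¹ *ᵥ (c⁻¹ • v)) := by
  have := invertibleOfNonzero hs
  rw [inv_smul A s hA, invOf_eq_inv, mulVec_smul, smul_mulVec, smul_smul, smul_smul,
    show s * c * c⁻¹ * s⁻¹ = 1 by field_simp, one_smul]

namespace MeasureTheory

variable {Ω : Type*} [MeasurableSpace Ω] {μ : Measure Ω} {Z W : Ω → ℝ}

lemma memLp_of_eq_zero_or_eq_one [IsFiniteMeasure μ] (hZ : AEStronglyMeasurable Z μ)
    (h01 : ∀ ω, Z ω = 0 ∨ Z ω = 1) (p : ENNReal) : MemLp Z p μ :=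
  .of_bound hZ 1 (.of_forall fun ω => by rcases h01 ω with h | h <;> simp [h])

lemma MemLp.mul_of_eq_zero_or_eq_one {p : ENNReal} (hW : MemLp W p μ)
    (hZ : AEStronglyMeasurable Z μ) (h01 : ∀ ω, Z ω = 0 ∨ Z ω = 1) : MemLp (Z * W) p μ :=
  hW.of_le (hZ.mul hW.1) (.of_forall fun ω => by rcases h01 ω with h | h <;> simp [h])

end MeasureTheory

namespace ProbabilityTheory

variable {Ω : Type*} [MeasurableSpace Ω] {μ : Measure Ω} [IsProbabilityMeasure μ]
  {Z W W₀ W₁ : Ω → ℝ}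

lemma covariance_self_of_eq_zero_or_eq_one (hZ : AEStronglyMeasurable Z μ)
    (h01 : ∀ ω, Z ω = 0 ∨ Z ω = 1) : cov[Z, Z; μ] = μ[Z] * (1 - μ[Z]) := by
  have hZZ : Z * Z = Z := funext fun ω => by rcases h01 ω with h | h <;> simp [h]
  have hZ2 := memLp_of_eq_zero_or_eq_one hZ h01 2
  rw [covariance_eq_sub hZ2 hZ2, hZZ]
  ring

lemma IndepFun.covariance_mul_left_self (h : IndepFun Z W μ) (hZ : AEStronglyMeasurable Z μ)
    (h01 : ∀ ω, Z ω = 0 ∨ Z ω = 1) (hW : MemLp W 2 μ) :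
    cov[Z * W, Z; μ] = cov[Z, Z; μ] * μ[W] := by
  have hZZW : Z * W * Z = Z * W := funext fun ω => by rcases h01 ω with h | h <;> simp [h]
  rw [covariance_eq_sub (hW.mul_of_eq_zero_or_eq_one hZ h01)
    (memLp_of_eq_zero_or_eq_one hZ h01 2), hZZW, h.integral_mul_eq_mul_integral hZ hW.1,
    covariance_self_of_eq_zero_or_eq_one hZ h01]
  ring

lemma IndepFun.covariance_mul_add_one_sub_mul_left_self
    (h : IndepFun Z (fun ω => (W₁ ω, W₀ ω)) μ) (hZ : AEStronglyMeasurable Z μ)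
    (h01 : ∀ ω, Z ω = 0 ∨ Z ω = 1)
    (hW₁ : MemLp W₁ 2 μ) (hW₀ : MemLp W₀ 2 μ) :
    cov[fun ω => Z ω * W₁ ω + (1 - Z ω) * W₀ ω, Z; μ] =
      cov[Z, Z; μ] * μ[W₁ - W₀] := by
  have hsplit : (fun ω => Z ω * W₁ ω + (1 - Z ω) * W₀ ω) = Z * (W₁ - W₀) + W₀ := by
    ext ω; simp only [Pi.add_apply, Pi.mul_apply, Pi.sub_apply]; ring
  have hdiff : IndepFun Z (W₁ - W₀) μ :=
    h.comp measurable_id (measurable_fst.sub measurable_snd)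
  have hW₀indep : IndepFun Z W₀ μ := h.comp measurable_id measurable_snd
  rw [hsplit, covariance_add_left ((hW₁.sub hW₀).mul_of_eq_zero_or_eq_one hZ h01) hW₀
    (memLp_of_eq_zero_or_eq_one hZ h01 2), hdiff.covariance_mul_left_self hZ h01 (hW₁.sub hW₀),
    hW₀indep.symm.covariance_eq_zero hW₀ (memLp_of_eq_zero_or_eq_one hZ h01 2), add_zero]

end ProbabilityTheory

theorem inverse_regression_covariate_adjusted_equivalence_general
    -- (a) sample-level data
    (n K L : ℕ) (hn : 0 < n)
    (zf : Fin n → ℝ) (ym : Matrix (Fin n) (Fin L) ℝ)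
    (Hx : Matrix (Fin n) (Fin n) ℝ)
    (βhatA : Fin L → ℝ)
    (hβhatA : βhatA = (ymᵀ * (1 - Hx) * ym)⁻¹ *ᵥ (ymᵀ *ᵥ ((1 - Hx) *ᵥ zf)))
    (τhatA : Fin L → ℝ)
    (hτhatA : τhatA = (zf ⬝ᵥ ((1 - Hx) *ᵥ zf))⁻¹ • (ymᵀ *ᵥ ((1 - Hx) *ᵥ zf)))
    (hzz : zf ⬝ᵥ ((1 - Hx) *ᵥ zf) ≠ 0)
    (hyyInv : IsUnit (ymᵀ * (1 - Hx) * ym).det)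
    -- (b) population-level data
    {Ω : Type*} [MeasurableSpace Ω] (μ : Measure Ω) [IsProbabilityMeasure μ]
    (Z : Ω → ℝ) (X : Ω → Fin K → ℝ) (Y1 Y0 : Ω → Fin L → ℝ)
    (hZmeas : Measurable Z)
    (hZ01 : ∀ ω, Z ω = 0 ∨ Z ω = 1)
    (hXL2 : MemLp X 2 μ) (hY1L2 : MemLp Y1 2 μ) (hY0L2 : MemLp Y0 2 μ)
    -- complete randomization: Z ⫫ (Y(1), Y(0), X)
    (hindep : IndepFun Z (fun ω => (Y1 ω, Y0 ω, X ω)) μ)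
    (Y : Ω → Fin L → ℝ) (hY : Y = fun ω j => Z ω * Y1 ω j + (1 - Z ω) * Y0 ω j)
    (τ : Fin L → ℝ) (hτ : τ = fun j => ∫ ω, (Y1 ω j - Y0 ω j) ∂μ)
    (EZ : ℝ) (hEZ : EZ = ∫ ω, Z ω ∂μ)
    (varZ : ℝ) (hvarZ : varZ = ∫ ω, (Z ω - EZ) ^ 2 ∂μ)
    (EY : Fin L → ℝ) (hEY : EY = fun j => ∫ ω, Y ω j ∂μ)
    (EX : Fin K → ℝ) (hEX : EX = fun k => ∫ ω, X ω k ∂μ)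
    (covX : Matrix (Fin K) (Fin K) ℝ)
    (covYX : Matrix (Fin L) (Fin K) ℝ)
    (covYZ : Fin L → ℝ)
    (hcovYZ : covYZ = fun i => ∫ ω, (Y ω i - EY i) * (Z ω - EZ) ∂μ)
    (covXZ : Fin K → ℝ)
    (hcovXZ : covXZ = fun k => ∫ ω, (X ω k - EX k) * (Z ω - EZ) ∂μ)
    (Φyyx : Matrix (Fin L) (Fin L) ℝ)
    -- population covariate-adjusted inverse regression coefficient
    (βA : Fin L → ℝ)
    (hβA : βA = Φyyx⁻¹ *ᵥ (covYZ - covYX *ᵥ (covX⁻¹ *ᵥ covXZ))) :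
    βhatA = ((n : ℝ)⁻¹ * (zf ⬝ᵥ ((1 - Hx) *ᵥ zf))) •
      (((n : ℝ)⁻¹ • (ymᵀ * (1 - Hx) * ym))⁻¹ *ᵥ τhatA) ∧
    βA = varZ • (Φyyx⁻¹ *ᵥ τ) := by
  refine ⟨?_, ?_⟩
  · rw [hβhatA, hτhatA]
    exact inv_mulVec_eq_smul_inv_smul_mulVec hyyInv _ (by positivity) hzz
  subst hY hEZ hEY hEX
  have hZ : AEStronglyMeasurable Z μ := hZmeas.aestronglyMeasurable
  have hvarZ' : varZ = cov[Z, Z; μ] := by simp only [hvarZ, covariance, sq]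
  have hXZ : covXZ = 0 := funext fun k => by
    rw [hcovXZ]
    exact (hindep.comp measurable_id (by fun_prop :
      Measurable fun t : _ × _ × (Fin K → ℝ) => t.2.2 k)).symm.covariance_eq_zero
      (hXL2.eval k) (memLp_of_eq_zero_or_eq_one hZ hZ01 2)
  have hYZ : covYZ = varZ • τ := funext fun i => by
    rw [hcovYZ, hvarZ', hτ]
    exact (hindep.comp measurable_id (by fun_prop :
      Measurable fun t : (Fin L → ℝ) × (Fin L → ℝ) × _ => (t.1 i, t.2.1 i))
      ).covariance_mul_add_one_sub_mul_left_self hZ hZ01 (hY1L2.eval i) (hY0L2.eval i)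
  rw [hβA, hXZ, mulVec_zero, mulVec_zero, sub_zero, hYZ, mulVec_smul]

/-- Proposition S1: covariate-adjusted equivalence in completely randomized experiments.
(a) the sample identity `β̂_A = {n⁻¹zᵀ(I−H_x)z}{n⁻¹yᵀ(I−H_x)y}⁻¹ τ̂_A`;
(b) under complete randomization,
`β_A = var(Z)[cov(Y) − cov(Y,X)cov(X)⁻¹cov(X,Y)]⁻¹ τ`. -/
theorem inverse_regression_covariate_adjusted_equivalence
    -- (a) sample-level data
    (n K L : ℕ) (hn : 0 < n)
    (zf : Fin n → ℝ) (xm : Matrix (Fin n) (Fin K) ℝ) (ym : Matrix (Fin n) (Fin L) ℝ)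
    (hzf01 : ∀ i, zf i = 0 ∨ zf i = 1)
    (Q : Matrix (Fin n) (Fin (K + 1)) ℝ)
    (hQ : Q = Matrix.of fun i k => Fin.cons (1 : ℝ) (fun j => xm i j) k)
    (Hx : Matrix (Fin n) (Fin n) ℝ) (hHx : Hx = Q * (Qᵀ * Q)⁻¹ * Qᵀ)
    (βhatA : Fin L → ℝ)
    (hβhatA : βhatA = (ymᵀ * (1 - Hx) * ym)⁻¹ *ᵥ (ymᵀ *ᵥ ((1 - Hx) *ᵥ zf)))
    (τhatA : Fin L → ℝ)
    (hτhatA : τhatA = (zf ⬝ᵥ ((1 - Hx) *ᵥ zf))⁻¹ • (ymᵀ *ᵥ ((1 - Hx) *ᵥ zf)))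
    (hzz : zf ⬝ᵥ ((1 - Hx) *ᵥ zf) ≠ 0)
    (hyyInv : IsUnit (ymᵀ * (1 - Hx) * ym).det)
    -- (b) population-level data
    {Ω : Type*} [MeasurableSpace Ω] (μ : Measure Ω) [IsProbabilityMeasure μ]
    (Z : Ω → ℝ) (X : Ω → Fin K → ℝ) (Y1 Y0 : Ω → Fin L → ℝ)
    (hZmeas : Measurable Z) (hXmeas : Measurable X)
    (hY1meas : Measurable Y1) (hY0meas : Measurable Y0)
    (hZ01 : ∀ ω, Z ω = 0 ∨ Z ω = 1)
    (hXL2 : MemLp X 2 μ) (hY1L2 : MemLp Y1 2 μ) (hY0L2 : MemLp Y0 2 μ)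
    -- complete randomization: Z ⫫ (Y(1), Y(0), X)
    (hindep : IndepFun Z (fun ω => (Y1 ω, Y0 ω, X ω)) μ)
    (p : ℝ) (hp : p = (μ {ω | Z ω = 1}).toReal) (hp0 : 0 < p) (hp1 : p < 1)
    (Y : Ω → Fin L → ℝ) (hY : Y = fun ω j => Z ω * Y1 ω j + (1 - Z ω) * Y0 ω j)
    (τ : Fin L → ℝ) (hτ : τ = fun j => ∫ ω, (Y1 ω j - Y0 ω j) ∂μ)
    (EZ : ℝ) (hEZ : EZ = ∫ ω, Z ω ∂μ)
    (varZ : ℝ) (hvarZ : varZ = ∫ ω, (Z ω - EZ) ^ 2 ∂μ)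
    (EY : Fin L → ℝ) (hEY : EY = fun j => ∫ ω, Y ω j ∂μ)
    (EX : Fin K → ℝ) (hEX : EX = fun k => ∫ ω, X ω k ∂μ)
    (covY : Matrix (Fin L) (Fin L) ℝ)
    (hcovY : covY = Matrix.of fun i j => ∫ ω, (Y ω i - EY i) * (Y ω j - EY j) ∂μ)
    (covX : Matrix (Fin K) (Fin K) ℝ)
    (hcovX : covX = Matrix.of fun k l => ∫ ω, (X ω k - EX k) * (X ω l - EX l) ∂μ)
    (covYX : Matrix (Fin L) (Fin K) ℝ)
    (hcovYX : covYX = Matrix.of fun i k => ∫ ω, (Y ω i - EY i) * (X ω k - EX k) ∂μ)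
    (covXY : Matrix (Fin K) (Fin L) ℝ) (hcovXY : covXY = covYXᵀ)
    (covYZ : Fin L → ℝ)
    (hcovYZ : covYZ = fun i => ∫ ω, (Y ω i - EY i) * (Z ω - EZ) ∂μ)
    (covXZ : Fin K → ℝ)
    (hcovXZ : covXZ = fun k => ∫ ω, (X ω k - EX k) * (Z ω - EZ) ∂μ)
    (hcovXInv : IsUnit covX.det)
    (Φyyx : Matrix (Fin L) (Fin L) ℝ)
    (hΦyyx : Φyyx = covY - covYX * covX⁻¹ * covXY)
    (hΦyyxInv : IsUnit Φyyx.det)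
    -- population covariate-adjusted inverse regression coefficient
    (βA : Fin L → ℝ)
    (hβA : βA = Φyyx⁻¹ *ᵥ (covYZ - covYX *ᵥ (covX⁻¹ *ᵥ covXZ))) :
    βhatA = ((n : ℝ)⁻¹ * (zf ⬝ᵥ ((1 - Hx) *ᵥ zf))) •
      (((n : ℝ)⁻¹ • (ymᵀ * (1 - Hx) * ym))⁻¹ *ᵥ τhatA) ∧
    βA = varZ • (Φyyx⁻¹ *ᵥ τ) :=
  inverse_regression_covariate_adjusted_equivalence_general n K L hn zf ym Hx βhatA hβhatA τhatA
    hτhatA hzz hyyInv μ Z X Y1 Y0 hZmeas hZ01 hXL2 hY1L2 hY0L2 hindep Y hY τ hτ EZ hEZ varZ hvarZ EY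
    hEY EX hEX covX covYX covYZ hcovYZ covXZ hcovXZ Φyyx βA hβA
end
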